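/- arXiv:1810.00265 — 2 statements merged into one kernel-verified Lean document; each statement's English description precedes it below -/
import Mathlib

section
/- Let φ, ψ be locally finite subsets of ℝ^d, let W ⊆ ℝ^d and let z ∈ W; write φ^z := φ ∪ {z}. Then the matching flower satisfies F(φ^z, ψ, z) ⊆ W if and only if F(φ^z ∩ W, ψ ∩ W, z) ⊆ W, and in this case the matching partners agree: τ(φ^z, ψ, z) = τ(φ^z ∩ W, ψ ∩ W, z). The analogous statement holds when z is added to the second configuration, i.e. with ψ^z := ψ ∪ {z}: F(φ, ψ^z, z) ⊆ W iff F(φ ∩ W, ψ^z ∩ W, z) ⊆ W, and then τ(φ, ψ^z, z) = τ(φ ∩ W, ψ^z ∩ W, z). -/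
/-!
Call two consecutive points of a competing chain for `z` a link. If `(u, v)` is a link and `u`
prefers a point `y` to `v`, then `y` lies in the flower and `(u, y)` is again a link; similarly
on the side of `v`. Hence, by strong induction on the round `n` of the algorithm, for
two configurations agreeing on the flower `F`, a link alive in round `n` of one is alive in the
other, and a link matched in round `n` of one is matched in the other: any competitor that could
break the match was matched away earlier in both. Applied to the link `(z, τ(z))` this gives the
same partner in both configurations; and every competing chain of the second configuration
stays inside `F` (each step is a link), so its flower is contained in `F`. With `φ ∩ W, ψ ∩ W`
as the second configuration when `F ⊆ W`, and vice versa, both directions follow.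
-/

open MeasureTheory Set Metric
open scoped ENNReal ENat NNReal Pointwise

noncomputable section

/-- `ℝ^d`. -/
abbrev V (d : ℕ) := EuclideanSpace ℝ (Fin d)

variable {d : ℕ}

/-- `x` is lexicographically strictly smaller than `y`. -/
def lexLT (x y : V d) : Prop := ∃ i : Fin d, x i < y i ∧ ∀ j : Fin d, j < i → x j = y j

/-- A point `p` of the first configuration prefers `x` to `y` (both in the second
configuration): closer, or at equal distance and lexicographically smaller. -/
def prefPhi (p x y : V d) : Prop :=
  dist x p < dist y p ∨ (dist x p = dist y p ∧ lexLT x y)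

/-- A point `x` of the second configuration prefers `p` to `q` (both in the first
configuration): closer, or at equal distance and lexicographically greater. -/
def prefPsi (x p q : V d) : Prop :=
  dist p x < dist q x ∨ (dist p x = dist q x ∧ lexLT q p)

/-- Preference over `Option` values: every point is preferred to `∞` (= `none`). -/
def prefPhiOpt (p x : V d) : Option (V d) → Prop
  | none => True
  | some y => prefPhi p x y

/-- Preference over `Option` values: every point is preferred to `∞` (= `none`). -/
def prefPsiOpt (x p : V d) : Option (V d) → Prop
  | none => True
  | some q => prefPsi x p q

/-- `p ∈ φ` and `x ∈ ψ` are mutually most preferred points of each other. -/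
def MutualNN (φ ψ : Set (V d)) (p x : V d) : Prop :=
  p ∈ φ ∧ x ∈ ψ ∧ (∀ y ∈ ψ, y ≠ x → prefPhi p x y) ∧ (∀ q ∈ φ, q ≠ p → prefPsi x p q)

/-- The pair `(φ_n, ψ_n)` of configurations of still unmatched points after `n` rounds of the
mutual nearest neighbour matching algorithm. -/
def stages (φ ψ : Set (V d)) : ℕ → Set (V d) × Set (V d)
  | 0 => (φ, ψ)
  | n + 1 =>
      let s := stages φ ψ n
      (s.1 \ {p | ∃ x, MutualNN s.1 s.2 p x}, s.2 \ {x | ∃ p, MutualNN s.1 s.2 p x})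

/-- `φ_∞`, the set of points of `φ` never matched by the algorithm. -/
def phiInf (φ ψ : Set (V d)) : Set (V d) := ⋂ n, (stages φ ψ n).1

/-- `ψ_∞`, the set of points of `ψ` never matched by the algorithm. -/
def psiInf (φ ψ : Set (V d)) : Set (V d) := ⋂ n, (stages φ ψ n).2

open Classical in
/-- The mutual nearest neighbour matching `τ(φ, ψ, ·)`; the value `none` represents `∞`,
points outside `φ ∪ ψ` are mapped to themselves. -/
def matchTau (φ ψ : Set (V d)) (z : V d) : Option (V d) :=
  if z ∈ φ then
    if h : ∃ x, ∃ n, MutualNN (stages φ ψ n).1 (stages φ ψ n).2 z x then some h.choose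
    else none
  else if z ∈ ψ then
    if h : ∃ p, ∃ n, MutualNN (stages φ ψ n).1 (stages φ ψ n).2 p z then some h.choose
    else none
  else some z

/-- A locally finite subset of `ℝ^d`. -/
def LocFinite (φ : Set (V d)) : Prop := ∀ r : ℝ, (φ ∩ closedBall 0 r).Finite

/-- `t` is a partial matching between `φ` and `ψ` (with `none` = unmatched). -/
def IsPartialMatching (φ ψ : Set (V d)) (t : V d → Option (V d)) : Prop :=
  (∀ p ∈ φ, ∀ x, t p = some x → x ∈ ψ) ∧ (∀ x ∈ ψ, ∀ p, t x = some p → p ∈ φ) ∧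
  (∀ p ∈ φ, ∀ x ∈ ψ, (t p = some x ↔ t x = some p))

/-- `t` is a stable partial matching between `φ` and `ψ`: a partial matching admitting no
unstable pair `(p, x)`, i.e. no pair where `x` prefers `p` to `t x` and `p` prefers `x`
to `t p`. -/
def IsStableMatching (φ ψ : Set (V d)) (t : V d → Option (V d)) : Prop :=
  IsPartialMatching φ ψ t ∧
  ¬ ∃ p ∈ φ, ∃ x ∈ ψ, prefPsiOpt x p (t x) ∧ prefPhiOpt p x (t p)

/-- `(z 0, …, z (n-1))`, `n ≥ 2`, is a descending chain in `(φ, ψ)`: points at even positions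
belong to `φ`, points at odd positions to `ψ`, and every interior point prefers its successor
to its predecessor. (This corresponds to the 1-based chain `(z_1, …, z_n)` of the paper.) -/
def DescChain (φ ψ : Set (V d)) (n : ℕ) (z : ℕ → V d) : Prop :=
  2 ≤ n ∧ (∀ i < n, if Even i then z i ∈ φ else z i ∈ ψ) ∧
    ∀ i, 1 ≤ i → i + 1 < n →
      (if Even i then prefPhi (z i) (z (i + 1)) (z (i - 1))
       else prefPsi (z i) (z (i + 1)) (z (i - 1)))

/-- Descending chain starting with a point of `ψ` (even positions in `ψ`, odd in `φ`). -/
def DescChainPsiStart (φ ψ : Set (V d)) (n : ℕ) (z : ℕ → V d) : Prop :=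
  2 ≤ n ∧ (∀ i < n, if Even i then z i ∈ ψ else z i ∈ φ) ∧
    ∀ i, 1 ≤ i → i + 1 < n →
      (if Even i then prefPsi (z i) (z (i + 1)) (z (i - 1))
       else prefPhi (z i) (z (i + 1)) (z (i - 1)))

/-- An infinite descending chain in `(φ, ψ)`. -/
def InfDescChain (φ ψ : Set (V d)) (z : ℕ → V d) : Prop :=
  (∀ i, if Even i then z i ∈ φ else z i ∈ ψ) ∧
    ∀ i, 1 ≤ i →
      (if Even i then prefPhi (z i) (z (i + 1)) (z (i - 1))
       else prefPsi (z i) (z (i + 1)) (z (i - 1)))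

/-- The union of balls `F_c` associated with a chain `c` of length `n`:
`B(c 0, ‖c 1 − c 0‖) ∪ ⋃_{i=1}^{n-1} B(c i, ‖c i − c (i-1)‖)`. -/
def chainBalls (n : ℕ) (c : ℕ → V d) : Set (V d) :=
  closedBall (c 0) (dist (c 1) (c 0)) ∪
    ⋃ i ∈ Finset.Ico 1 n, closedBall (c i) (dist (c i) (c (i - 1)))

open Classical in
/-- The matching flower `F(φ, ψ, z)` of a point `z`: all of `ℝ^d` if `z ∈ φ ∪ ψ` is unmatched,
`{z}` if `z ∉ φ ∪ ψ`, and otherwise the union of the ball sets of all competing chains for `z`,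
i.e. descending chains starting at `z` whose second point is equal to, or preferred by `z` to,
the matching partner of `z`. -/
def flower (φ ψ : Set (V d)) (z : V d) : Set (V d) :=
  if z ∈ φ then
    match matchTau φ ψ z with
    | none => Set.univ
    | some w =>
        ⋃ (n : ℕ) (c : ℕ → V d)
          (_ : DescChain φ ψ n c ∧ c 0 = z ∧ (c 1 = w ∨ prefPhi z (c 1) w)),
          chainBalls n c
  else if z ∈ ψ then
    match matchTau φ ψ z with
    | none => Set.univ
    | some w =>
        ⋃ (n : ℕ) (c : ℕ → V d)
          (_ : DescChainPsiStart φ ψ n c ∧ c 0 = z ∧ (c 1 = w ∨ prefPsi z (c 1) w)),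
          chainBalls n c
  else {z}

/-- The lattice `ℤ^d` as a subset of `ℝ^d`. -/
def lattice (d : ℕ) : Set (V d) := Set.range (fun k : Fin d → ℤ => (WithLp.toLp 2 (fun i => (k i : ℝ)) : V d))


/-- The point of `ℝ^d` with the given integer coordinates. -/
def intVec {d : ℕ} (k : Fin d → ℤ) : V d := WithLp.toLp 2 (fun i => (k i : ℝ))

/-- Translation of a configuration by a vector. -/
def shift (φ : Set (V d)) (x : V d) : Set (V d) := (· + x) '' φ

/-- The set of matched points of `ψ` in the mutual nearest neighbour matching of `φ`
with `ψ`. -/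
def matchedPsi (φ ψ : Set (V d)) : Set (V d) := {x ∈ ψ | matchTau φ ψ x ≠ none}

open Classical in
/-- The matching status `M(φ, ψ, z)`: `1` if `z` is matched, `0` otherwise. -/
def matchStatus (φ ψ : Set (V d)) (z : V d) : ℝ :=
  if ∃ w, matchTau φ ψ z = some w ∧ w ∈ φ ∪ ψ then 1 else 0

/-- The σ-field on configurations generated by the counting maps `φ ↦ #(φ ∩ B)`,
`B` Borel. -/
def configSA (d : ℕ) : MeasurableSpace (Set (V d)) :=
  MeasurableSpace.generateFrom
    {A | ∃ (B : Set (V d)) (n : ℕ), MeasurableSet B ∧ A = {φ | (φ ∩ B).encard = (n : ℕ∞)}}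

/-- Measurability of a configuration-valued map with respect to the counting σ-field. -/
def PPMeasurable {Ω : Type*} [MeasurableSpace Ω] (Φ : Ω → Set (V d)) : Prop :=
  ∀ A : Set (Set (V d)), MeasurableSet[configSA d] A → MeasurableSet (Φ ⁻¹' A)

/-- The closed unit cube `[0,1]^d`. -/
def cube01 (d : ℕ) : Set (V d) := {y | ∀ i, y i ∈ Set.Icc (0 : ℝ) 1}

/-- The half-open unit cube `[0,1)^d`. -/
def cube01' (d : ℕ) : Set (V d) := {y | ∀ i, y i ∈ Set.Ico (0 : ℝ) 1}

/-- `Ψ` is a point process: measurable (for the counting σ-field) and almost surely locally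
finite. -/
def IsPointProcess {Ω : Type*} [MeasurableSpace Ω] (P : Measure Ω) (Ψ : Ω → Set (V d)) : Prop :=
  PPMeasurable Ψ ∧ ∀ᵐ ω ∂P, LocFinite (Ψ ω)

/-- `Ψ` is a stationary point process: the distribution is invariant under all
translations. -/
def IsStationaryPP {Ω : Type*} [MeasurableSpace Ω] (P : Measure Ω) (Ψ : Ω → Set (V d)) : Prop :=
  IsPointProcess P Ψ ∧
    ∀ (x : V d) (A : Set (Set (V d))), MeasurableSet[configSA d] A →
      P {ω | shift (Ψ ω) x ∈ A} = P {ω | Ψ ω ∈ A}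

/-- `Ψ` has intensity `α`: the expected number of points in `[0,1]^d` equals `α`. -/
def HasIntensity {Ω : Type*} [MeasurableSpace Ω] (P : Measure Ω) (Ψ : Ω → Set (V d))
    (α : ℝ) : Prop :=
  ∫⁻ ω, ((Ψ ω ∩ cube01 d).encard : ℝ≥0∞) ∂P = ENNReal.ofReal α

/-- `Ψ` is a stationary Poisson process with intensity `α`: Poisson counts with mean
`α λ_d(B)` on every Borel set of finite volume, and independent counts on pairwise disjoint
Borel sets. -/
def IsPoissonPP {Ω : Type*} [MeasurableSpace Ω] (P : Measure Ω) (Ψ : Ω → Set (V d))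
    (α : ℝ) : Prop :=
  IsPointProcess P Ψ ∧
  (∀ B : Set (V d), MeasurableSet B → volume B < ⊤ → ∀ n : ℕ,
      P {ω | (Ψ ω ∩ B).encard = (n : ℕ∞)} =
        ENNReal.ofReal (Real.exp (-(α * (volume B).toReal)) *
          (α * (volume B).toReal) ^ n / n.factorial)) ∧
  (∀ (k : ℕ) (B : Fin k → Set (V d)), (∀ i, MeasurableSet (B i)) →
      Pairwise (Function.onFun Disjoint B) →
      ∀ n : Fin k → ℕ,
        P {ω | ∀ i, (Ψ ω ∩ B i).encard = (n i : ℕ∞)} =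
          ∏ i, P {ω | (Ψ ω ∩ B i).encard = (n i : ℕ∞)})

/-- `Ψ` has `n`-th correlation function `ρ`: for every measurable `f ≥ 0`, the expected sum of
`f` over `n`-tuples of pairwise distinct points of `Ψ` equals `∫ f ρ`. -/
def HasCorrelationFunction {Ω : Type*} [MeasurableSpace Ω] (P : Measure Ω)
    (Ψ : Ω → Set (V d)) (n : ℕ) (ρ : (Fin n → V d) → ℝ≥0∞) : Prop :=
  Measurable ρ ∧
    ∀ f : (Fin n → V d) → ℝ≥0∞, Measurable f →
      ∫⁻ ω, ∑' t : {t : Fin n → V d // (∀ i, t i ∈ Ψ ω) ∧ Function.Injective t}, f t ∂P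
        = ∫⁻ x, f x * ρ x ∂(volume : Measure (Fin n → V d))

/-- The `α_{p,q}(s)` mixing coefficient of a point process: supremum of covariances of
`{0,1}`-valued functionals of the restrictions of `Ψ` to sets `A`, `B` of volume at most
`p` resp. `q` and mutual distance at least `s`. -/
def mixingCoef {Ω : Type*} [MeasurableSpace Ω] (P : Measure Ω) (Ψ : Ω → Set (V d))
    (p q s : ℝ) : ℝ :=
  sSup {v : ℝ | ∃ (S T : Set (Set (V d))) (A B : Set (V d)),
    MeasurableSet[configSA d] S ∧ MeasurableSet[configSA d] T ∧
    MeasurableSet A ∧ MeasurableSet B ∧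
    volume A ≤ ENNReal.ofReal p ∧ volume B ≤ ENNReal.ofReal q ∧
    (∀ a ∈ A, ∀ b ∈ B, s ≤ dist a b) ∧
    v = |(P {ω | Ψ ω ∩ A ∈ S ∧ Ψ ω ∩ B ∈ T}).toReal -
          (P {ω | Ψ ω ∩ A ∈ S}).toReal * (P {ω | Ψ ω ∩ B ∈ T}).toReal|}

theorem mem_iff_of_inter_eq {X : Type*} {s t F : Set X} {x : X} (h : s ∩ F = t ∩ F)
    (hx : x ∈ F) : x ∈ s ↔ x ∈ t := by
  simpa [hx] using congrArg (x ∈ ·) h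

theorem inter_eq_inter_of_subset {X : Type*} {s t F W : Set X} (hF : F ⊆ W)
    (h : s ∩ W = t ∩ W) : s ∩ F = t ∩ F := by
  rw [← inter_eq_right.2 hF, ← inter_assoc, h, inter_assoc]

/-- `P p x y` means that `p` prefers `x` to `y`. Stating the matching for an abstract pair of
preferences makes the two configurations interchangeable (`matchStages_swap`). -/
structure DistPref (P : V d → V d → V d → Prop) : Prop where
  asymm : ∀ {p x y}, P p x y → ¬ P p y x
  trans : ∀ {p x y t}, P p x y → P p y t → P p x t
  total : ∀ {p x y}, x ≠ y → P p x y ∨ P p y x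
  dist_le : ∀ {p x y}, P p x y → dist x p ≤ dist y p

theorem DistPref.of_key {ι : Type*} [LinearOrder ι] {P : V d → V d → V d → Prop}
    (key : V d → ι) (hkey : Function.Injective key)
    (hP : ∀ p x y, P p x y ↔ toLex (dist x p, key x) < toLex (dist y p, key y)) :
    DistPref P where
  asymm h h' := lt_asymm ((hP _ _ _).1 h) ((hP _ _ _).1 h')
  trans h h' := (hP _ _ _).2 (((hP _ _ _).1 h).trans ((hP _ _ _).1 h'))
  total hxy := by
    simp only [hP]
    exact lt_or_gt_of_ne fun h => hxy (hkey (congrArg (fun q => (ofLex q).2) h))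
  dist_le h := by
    rcases Prod.Lex.toLex_lt_toLex.1 ((hP _ _ _).1 h) with h | ⟨h, -⟩
    exacts [h.le, h.le]

theorem lexLT_iff {x y : V d} : lexLT x y ↔ toLex (WithLp.ofLp x) < toLex (WithLp.ofLp y) :=
  ⟨fun ⟨i, hi, hlt⟩ => ⟨i, hlt, hi⟩, fun ⟨i, hlt, hi⟩ => ⟨i, hi, hlt⟩⟩

theorem distPref_prefPhi : DistPref (d := d) prefPhi :=
  .of_key (fun x => toLex (WithLp.ofLp x)) (toLex.injective.comp (WithLp.ofLp_injective 2))
    fun p x y => by rw [Prod.Lex.toLex_lt_toLex, prefPhi, lexLT_iff]; rfl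

theorem distPref_prefPsi : DistPref (d := d) prefPsi :=
  .of_key (fun x => OrderDual.toDual (toLex (WithLp.ofLp x)))
    (OrderDual.toDual.injective.comp (toLex.injective.comp (WithLp.ofLp_injective 2)))
    fun p x y => by rw [Prod.Lex.toLex_lt_toLex, prefPsi, lexLT_iff]; rfl

section Stages

variable (A B : V d → V d → V d → Prop)

/-- `MutualBest`, `matchStages` and `PrefChain` below are `MutualNN`, `stages` and `DescChain` for
arbitrary preferences `A` of first-configuration points and `B` of second-configuration points. -/
def MutualBest (α β : Set (V d)) (p x : V d) : Prop :=
  p ∈ α ∧ x ∈ β ∧ (∀ y ∈ β, y ≠ x → A p x y) ∧ (∀ q ∈ α, q ≠ p → B x p q)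

def matchStages (α β : Set (V d)) : ℕ → Set (V d) × Set (V d)
  | 0 => (α, β)
  | n + 1 =>
      let s := matchStages α β n
      (s.1 \ {p | ∃ x, MutualBest A B s.1 s.2 p x}, s.2 \ {x | ∃ p, MutualBest A B s.1 s.2 p x})

def MatchedAt (α β : Set (V d)) (n : ℕ) (p x : V d) : Prop :=
  MutualBest A B (matchStages A B α β n).1 (matchStages A B α β n).2 p x

variable {A B} {α β : Set (V d)} {m n : ℕ} {p x y : V d}

theorem mutualBest_swap : MutualBest B A β α x p ↔ MutualBest A B α β p x := by
  unfold MutualBest; tauto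

theorem matchStages_swap (n : ℕ) : matchStages B A β α n = (matchStages A B α β n).swap := by
  induction n with
  | zero => rfl
  | succ n ih =>
    simp only [matchStages, ih, Prod.fst_swap, Prod.snd_swap, mutualBest_swap, Prod.swap_prod_mk]

theorem matchedAt_swap : MatchedAt B A β α n x p ↔ MatchedAt A B α β n p x := by
  rw [MatchedAt, matchStages_swap, Prod.fst_swap, Prod.snd_swap, mutualBest_swap, MatchedAt]

theorem matchStages_antitone : Antitone (matchStages A B α β) :=
  antitone_nat_of_succ_le fun _ => ⟨sdiff_subset, sdiff_subset⟩

theorem matchStages_fst_subset : (matchStages A B α β n).1 ⊆ α :=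
  (matchStages_antitone n.zero_le).1

theorem matchStages_snd_subset : (matchStages A B α β n).2 ⊆ β :=
  (matchStages_antitone n.zero_le).2

theorem MatchedAt.not_mem_succ_fst (h : MatchedAt A B α β n p x) :
    p ∉ (matchStages A B α β (n + 1)).1 :=
  fun hp => hp.2 ⟨x, h⟩

theorem MatchedAt.not_mem_succ_snd (h : MatchedAt A B α β n p x) :
    x ∉ (matchStages A B α β (n + 1)).2 :=
  fun hx => hx.2 ⟨p, h⟩

theorem exists_matchedAt_fst (hp : p ∈ α) (h : p ∉ (matchStages A B α β n).1) :
    ∃ k < n, ∃ x, MatchedAt A B α β k p x := by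
  induction n with
  | zero => exact absurd hp h
  | succ n ih =>
    by_cases hn : p ∈ (matchStages A B α β n).1
    · by_contra hc
      exact h ⟨hn, fun ⟨x, hx⟩ => hc ⟨n, n.lt_succ_self, x, hx⟩⟩
    · obtain ⟨k, hk, x, hx⟩ := ih hn
      exact ⟨k, hk.trans n.lt_succ_self, x, hx⟩

theorem exists_matchedAt_snd (hx : x ∈ β) (h : x ∉ (matchStages A B α β n).2) :
    ∃ k < n, ∃ p, MatchedAt A B α β k p x := by
  simpa only [matchedAt_swap] using
    exists_matchedAt_fst (A := B) (B := A) hx (by rwa [matchStages_swap])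

theorem MatchedAt.unique (hA : DistPref A) (h : MatchedAt A B α β n p x)
    (h' : MatchedAt A B α β m p y) : x = y := by
  rcases lt_trichotomy n m with hnm | rfl | hmn
  · exact absurd ((matchStages_antitone hnm).1 h'.1) h.not_mem_succ_fst
  · by_contra hxy
    exact hA.asymm (h.2.2.1 y h'.2.1 (Ne.symm hxy)) (h'.2.2.1 x h.2.1 hxy)
  · exact absurd ((matchStages_antitone hmn).1 h.1) h'.not_mem_succ_fst

end Stages

section Chains

variable (A B : V d → V d → V d → Prop) (α β : Set (V d)) (z w : V d)

def PrefChain (n : ℕ) (c : ℕ → V d) : Prop :=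
  2 ≤ n ∧ (∀ i < n, if Even i then c i ∈ α else c i ∈ β) ∧
    ∀ i, 1 ≤ i → i + 1 < n →
      (if Even i then A (c i) (c (i + 1)) (c (i - 1))
       else B (c i) (c (i + 1)) (c (i - 1)))

def IsCompetingChain (n : ℕ) (c : ℕ → V d) : Prop :=
  PrefChain A B α β n c ∧ c 0 = z ∧ (c 1 = w ∨ A z (c 1) w)

def chainFlower : Set (V d) :=
  ⋃ (n : ℕ) (c : ℕ → V d) (_ : IsCompetingChain A B α β z w n c), chainBalls n c

variable {A B α β z w} {n k : ℕ} {c : ℕ → V d} {y : V d}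

namespace IsCompetingChain

theorem chainBalls_subset (h : IsCompetingChain A B α β z w n c) :
    chainBalls n c ⊆ chainFlower A B α β z w :=
  subset_iUnion₂_of_subset n c (subset_iUnion_of_subset h subset_rfl)

theorem closedBall_zero_subset (h : IsCompetingChain A B α β z w n c) :
    closedBall z (dist (c 1) z) ⊆ chainFlower A B α β z w :=
  fun _ hx => h.chainBalls_subset (Or.inl (by rwa [h.2.1]))

theorem closedBall_succ_subset (h : IsCompetingChain A B α β z w n c) (hk : k + 1 < n) :
    closedBall (c (k + 1)) (dist (c (k + 1)) (c k)) ⊆ chainFlower A B α β z w := by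
  refine Subset.trans ?_ (subset_union_right.trans h.chainBalls_subset)
  exact subset_biUnion_of_mem (u := fun i => closedBall (c i) (dist (c i) (c (i - 1))))
    (Finset.mem_coe.2 (Finset.mem_Ico.2 ⟨k.succ_pos, hk⟩))

theorem extend (h : IsCompetingChain A B α β z w (k + 2) c)
    (hy : if Even (k + 2) then y ∈ α else y ∈ β)
    (hpref : if Even (k + 1) then A (c (k + 1)) y (c k) else B (c (k + 1)) y (c k)) :
    IsCompetingChain A B α β z w (k + 3) (Function.update c (k + 2) y) := by
  obtain ⟨⟨-, hmem, hchain⟩, h0, h1⟩ := h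
  refine ⟨⟨by omega, fun i hi => ?_, fun i hi1 hi => ?_⟩, ?_, ?_⟩
  · rcases Nat.lt_succ_iff_lt_or_eq.1 hi with hi | rfl
    · simpa [Function.update_of_ne hi.ne] using hmem i hi
    · simpa using hy
  · rcases Nat.lt_succ_iff_lt_or_eq.1 hi with hi | hi
    · simpa [Function.update_of_ne hi.ne, Function.update_of_ne (show i ≠ k + 2 by omega),
        Function.update_of_ne (show i - 1 ≠ k + 2 by omega)] using hchain i hi1 hi
    · obtain rfl : i = k + 1 := by omega
      simpa using hpref
  · simpa using h0
  · simpa using h1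

end IsCompetingChain

theorem isCompetingChain_pair (hz : z ∈ α) (hy : y ∈ β) (hyw : y = w ∨ A z y w) :
    IsCompetingChain A B α β z w 2 (fun i => if i = 0 then z else y) := by
  refine ⟨⟨le_rfl, fun i hi => ?_, fun i hi1 hi => by omega⟩, rfl, by simpa using hyw⟩
  interval_cases i <;> simpa

variable (A B α β z w)

/-- `Odd k` puts `u` at an even position of the chain, i.e. in the first configuration. -/
def LastStepFst (x u : V d) : Prop :=
  ∃ k c, IsCompetingChain A B α β z w (k + 2) c ∧ Odd k ∧ c k = x ∧ c (k + 1) = u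

def LastStepSnd (x u : V d) : Prop :=
  ∃ k c, IsCompetingChain A B α β z w (k + 2) c ∧ Even k ∧ c k = x ∧ c (k + 1) = u

variable {A B α β z w} {u x q : V d}

theorem LastStepFst.closedBall_subset (h : LastStepFst A B α β z w x u) :
    closedBall u (dist u x) ⊆ chainFlower A B α β z w := by
  obtain ⟨k, c, hc, -, rfl, rfl⟩ := h
  exact hc.closedBall_succ_subset (by omega)

theorem LastStepSnd.closedBall_subset (h : LastStepSnd A B α β z w x u) :
    closedBall u (dist u x) ⊆ chainFlower A B α β z w := by
  obtain ⟨k, c, hc, -, rfl, rfl⟩ := h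
  exact hc.closedBall_succ_subset (by omega)

theorem LastStepFst.extend (h : LastStepFst A B α β z w x u) (hy : y ∈ β) (hpref : A u y x) :
    LastStepSnd A B α β z w u y := by
  obtain ⟨k, c, hc, hk, rfl, rfl⟩ := h
  refine ⟨k + 1, Function.update c (k + 2) y, hc.extend ?_ ?_, hk.add_one, by simp, by simp⟩
  · rwa [if_neg (by simpa [Nat.even_add_one] using hk)]
  · rwa [if_pos (by simpa [Nat.even_add_one] using hk)]

theorem LastStepSnd.extend (h : LastStepSnd A B α β z w x u) (hq : q ∈ α) (hpref : B u q x) :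
    LastStepFst A B α β z w u q := by
  obtain ⟨k, c, hc, hk, rfl, rfl⟩ := h
  refine ⟨k + 1, Function.update c (k + 2) q, hc.extend ?_ ?_, hk.add_one, by simp, by simp⟩
  · rwa [if_pos (by simpa [Nat.even_add_one] using hk)]
  · rwa [if_neg (by simpa [Nat.even_add_one] using hk)]

end Chains

section LinkRelation

/-- The properties of the pairs `(u, x)` of consecutive points of competing chains (`u` in the first
configuration, `x` in the second, in either order along the chain) that the matching argument
uses: the balls around them lie in the flower `F`, and a point that one of them prefers to the
other forms a new such pair with it. -/
structure IsLinkRelation (A B : V d → V d → V d → Prop) (α β F : Set (V d))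
    (R : V d → V d → Prop) : Prop where
  ball_fst : ∀ {u x}, R u x → closedBall u (dist u x) ⊆ F
  ball_snd : ∀ {u x}, R u x → closedBall x (dist u x) ⊆ F
  improve_snd : ∀ {u x y}, R u x → y ∈ β → A u y x → R u y
  improve_fst : ∀ {u x q}, R u x → q ∈ α → B x q u → R q x

def LinksSurvive (A B : V d → V d → V d → Prop) (α₁ β₁ α₂ β₂ : Set (V d)) (R : V d → V d → Prop)
    (n : ℕ) : Prop :=
  ∀ ⦃u v⦄, R u v → u ∈ (matchStages A B α₁ β₁ n).1 → v ∈ (matchStages A B α₁ β₁ n).2 →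
    u ∈ (matchStages A B α₂ β₂ n).1 ∧ v ∈ (matchStages A B α₂ β₂ n).2

def MatchesTransfer (A B : V d → V d → V d → Prop) (α₁ β₁ α₂ β₂ : Set (V d)) (R : V d → V d → Prop)
    (n : ℕ) : Prop :=
  ∀ ⦃u v⦄, R u v → MatchedAt A B α₁ β₁ n u v → MatchedAt A B α₂ β₂ n u v

variable {A B : V d → V d → V d → Prop} {α β α' β' α₁ β₁ α₂ β₂ F : Set (V d)}
  {R : V d → V d → Prop} {n : ℕ} {c : ℕ → V d} {p q u v x y z w : V d}

theorem MatchesTransfer.swap (h : MatchesTransfer A B α₁ β₁ α₂ β₂ R n) :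
    MatchesTransfer B A β₁ α₁ β₂ α₂ (flip R) n :=
  fun _ _ hvu hm => matchedAt_swap.2 (h hvu (matchedAt_swap.1 hm))

namespace IsLinkRelation

theorem swap (hR : IsLinkRelation A B α β F R) : IsLinkRelation B A β α F (flip R) where
  ball_fst hux := by simpa only [dist_comm] using hR.ball_snd hux
  ball_snd hux := by simpa only [dist_comm] using hR.ball_fst hux
  improve_snd := hR.improve_fst
  improve_fst := hR.improve_snd

theorem mem_of_prefers_snd (hR : IsLinkRelation A B α β F R) (hA : DistPref A) (hux : R u x)
    (hyx : A u y x) : y ∈ F :=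
  hR.ball_fst hux (by rw [mem_closedBall, dist_comm u x]; exact hA.dist_le hyx)

theorem mem_of_prefers_fst (hR : IsLinkRelation A B α β F R) (hB : DistPref B) (hux : R u x)
    (hqu : B x q u) : q ∈ F :=
  hR.swap.mem_of_prefers_snd hB hux hqu

theorem congr (hR : IsLinkRelation A B α β F R) (hA : DistPref A) (hB : DistPref B)
    (hα : α ∩ F = α' ∩ F) (hβ : β ∩ F = β' ∩ F) : IsLinkRelation A B α' β' F R where
  ball_fst := hR.ball_fst
  ball_snd := hR.ball_snd
  improve_snd hux hy hyx :=
    hR.improve_snd hux ((mem_iff_of_inter_eq hβ (hR.mem_of_prefers_snd hA hux hyx)).2 hy) hyx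
  improve_fst hux hq hqu :=
    hR.improve_fst hux ((mem_iff_of_inter_eq hα (hR.mem_of_prefers_fst hB hux hqu)).2 hq) hqu

theorem partner_snd (hR : IsLinkRelation A B α β F R) (hux : R u x)
    (hx : x ∈ (matchStages A B α β n).2) (huv : MatchedAt A B α β n u v) : R u v := by
  obtain ⟨-, hv, hbest, -⟩ := huv
  rcases eq_or_ne v x with rfl | hvx
  · exact hux
  · exact hR.improve_snd hux (matchStages_snd_subset hv) (hbest x hx hvx.symm)

theorem partner_fst (hR : IsLinkRelation A B α β F R) (hux : R u x)
    (hu : u ∈ (matchStages A B α β n).1) (hpx : MatchedAt A B α β n p x) : R p x :=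
  hR.swap.partner_snd (u := x) hux (by rwa [matchStages_swap]) (matchedAt_swap.2 hpx)

/-- A competitor `y` that `u` would prefer to its partner `v` in the second configuration forms a
link with `u`, so it was matched away earlier in the first configuration, and hence, by transfer
at that earlier stage, also in the second one. -/
theorem prefers_of_matchesTransfer (hR : IsLinkRelation A B α₁ β₁ F R) (hA : DistPref A)
    (hβ : β₁ ∩ F = β₂ ∩ F) (hT : ∀ k < n, MatchesTransfer A B α₁ β₁ α₂ β₂ R k) (huv : R u v)
    (hm : MatchedAt A B α₁ β₁ n u v) (hy : y ∈ (matchStages A B α₂ β₂ n).2) (hyv : y ≠ v) :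
    A u v y := by
  by_contra hvy
  have hyv' : A u y v := (hA.total hyv).resolve_right hvy
  have hyβ : y ∈ β₁ :=
    (mem_iff_of_inter_eq hβ (hR.mem_of_prefers_snd hA huv hyv')).2 (matchStages_snd_subset hy)
  have hy_gone : y ∉ (matchStages A B α₁ β₁ n).2 := fun hy' => hA.asymm (hm.2.2.1 y hy' hyv) hyv'
  obtain ⟨k, hk, p, hpy⟩ := exists_matchedAt_snd hyβ hy_gone
  have hpy' : R p y :=
    hR.partner_fst (hR.improve_snd huv hyβ hyv') ((matchStages_antitone hk.le).1 hm.1) hpy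
  exact (hT k hk hpy' hpy).not_mem_succ_snd ((matchStages_antitone hk).2 hy)

theorem matchesTransfer (hR : IsLinkRelation A B α₁ β₁ F R) (hA : DistPref A) (hB : DistPref B)
    (hα : α₁ ∩ F = α₂ ∩ F) (hβ : β₁ ∩ F = β₂ ∩ F) (hS : LinksSurvive A B α₁ β₁ α₂ β₂ R n)
    (hT : ∀ k < n, MatchesTransfer A B α₁ β₁ α₂ β₂ R k) : MatchesTransfer A B α₁ β₁ α₂ β₂ R n := by
  intro u v huv hm
  obtain ⟨hu, hv⟩ := hS huv hm.1 hm.2.1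
  refine ⟨hu, hv, fun y hy hyv => hR.prefers_of_matchesTransfer hA hβ hT huv hm hy hyv,
    fun q hq hqu => ?_⟩
  exact hR.swap.prefers_of_matchesTransfer hB hα (fun k hk => (hT k hk).swap) huv
    (matchedAt_swap.2 hm) (by rwa [matchStages_swap]) hqu

theorem linksSurvive_zero (hR : IsLinkRelation A B α₁ β₁ F R) (hα : α₁ ∩ F = α₂ ∩ F)
    (hβ : β₁ ∩ F = β₂ ∩ F) : LinksSurvive A B α₁ β₁ α₂ β₂ R 0 := fun _ _ huv hu hv =>
  ⟨(mem_iff_of_inter_eq hα (hR.ball_fst huv (mem_closedBall_self dist_nonneg))).1 hu,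
    (mem_iff_of_inter_eq hβ (hR.ball_snd huv (mem_closedBall_self dist_nonneg))).1 hv⟩

theorem linksSurvive_succ (hR₂ : IsLinkRelation A B α₂ β₂ F R)
    (hS : LinksSurvive A B α₁ β₁ α₂ β₂ R n) (hT : MatchesTransfer A B α₂ β₂ α₁ β₁ R n) :
    LinksSurvive A B α₁ β₁ α₂ β₂ R (n + 1) := by
  intro u v huv hu hv
  obtain ⟨hu', hv'⟩ := hS huv ((matchStages_antitone n.le_succ).1 hu)
    ((matchStages_antitone n.le_succ).2 hv)
  exact ⟨⟨hu', fun ⟨_, huv'⟩ => (hT (hR₂.partner_snd huv hv' huv') huv').not_mem_succ_fst hu⟩,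
    ⟨hv', fun ⟨_, hpv⟩ => (hT (hR₂.partner_fst huv hu' hpv) hpv).not_mem_succ_snd hv⟩⟩

theorem linksSurvive_and_matchesTransfer (hR₁ : IsLinkRelation A B α₁ β₁ F R)
    (hR₂ : IsLinkRelation A B α₂ β₂ F R) (hA : DistPref A) (hB : DistPref B)
    (hα : α₁ ∩ F = α₂ ∩ F) (hβ : β₁ ∩ F = β₂ ∩ F) (n : ℕ) :
    (LinksSurvive A B α₁ β₁ α₂ β₂ R n ∧ MatchesTransfer A B α₁ β₁ α₂ β₂ R n) ∧
      (LinksSurvive A B α₂ β₂ α₁ β₁ R n ∧ MatchesTransfer A B α₂ β₂ α₁ β₁ R n) := by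
  induction n using Nat.strong_induction_on with
  | _ n ih =>
    have hS : LinksSurvive A B α₁ β₁ α₂ β₂ R n ∧ LinksSurvive A B α₂ β₂ α₁ β₁ R n := by
      cases n with
      | zero => exact ⟨hR₁.linksSurvive_zero hα hβ, hR₂.linksSurvive_zero hα.symm hβ.symm⟩
      | succ m =>
        have ihm := ih m m.lt_succ_self
        exact ⟨hR₂.linksSurvive_succ ihm.1.1 ihm.2.2, hR₁.linksSurvive_succ ihm.2.1 ihm.1.2⟩
    exact ⟨⟨hS.1, hR₁.matchesTransfer hA hB hα hβ hS.1 fun k hk => (ih k hk).1.2⟩,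
      ⟨hS.2, hR₂.matchesTransfer hA hB hα.symm hβ.symm hS.2 fun k hk => (ih k hk).2.2⟩⟩

theorem matchedAt_of_inter_eq (hR : IsLinkRelation A B α β F R) (hA : DistPref A)
    (hB : DistPref B) (hα : α ∩ F = α' ∩ F) (hβ : β ∩ F = β' ∩ F) (huv : R u v)
    (hm : MatchedAt A B α β n u v) : MatchedAt A B α' β' n u v :=
  (hR.linksSurvive_and_matchesTransfer (hR.congr hA hB hα hβ) hA hB hα hβ n).1.2 huv hm

theorem isCompetingChain_links (hR : IsLinkRelation A B α β F R) (hA : DistPref A)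
    (hB : DistPref B) (hα : α ∩ F = α' ∩ F) (hβ : β ∩ F = β' ∩ F) (hzw : R z w)
    (hc : IsCompetingChain A B α' β' z w n c) (i : ℕ) (hi : i + 1 < n) :
    if Even i then R (c i) (c (i + 1)) else R (c (i + 1)) (c i) := by
  obtain ⟨⟨-, hmem, hpref⟩, h0, h1⟩ := hc
  induction i with
  | zero =>
    have hc1 : c 1 ∈ β' := by simpa using hmem 1 hi
    rw [if_pos Even.zero, h0]
    rcases h1 with h1 | h1
    · rwa [h1]
    · exact hR.improve_snd hzw
        ((mem_iff_of_inter_eq hβ (hR.mem_of_prefers_snd hA hzw h1)).2 hc1) h1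
  | succ i ih =>
    have hl := ih (by omega)
    have hp := hpref (i + 1) (by omega) hi
    have hm := hmem (i + 2) hi
    simp only [Nat.add_sub_cancel] at hp
    rcases Nat.even_or_odd i with he | ho
    · rw [if_pos he] at hl
      rw [if_neg (by simpa [Nat.even_add_one] using he)] at hp ⊢
      rw [if_pos (by simpa [Nat.even_add] using he)] at hm
      exact hR.improve_fst hl ((mem_iff_of_inter_eq hα (hR.mem_of_prefers_fst hB hl hp)).2 hm) hp
    · rw [if_neg (Nat.not_even_iff_odd.2 ho)] at hl
      rw [if_pos ho.add_one] at hp ⊢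
      rw [if_neg (by simpa [Nat.even_add, Nat.not_even_iff_odd] using ho)] at hm
      exact hR.improve_snd hl ((mem_iff_of_inter_eq hβ (hR.mem_of_prefers_snd hA hl hp)).2 hm) hp

theorem mem_of_isCompetingChain (hR : IsLinkRelation A B α β F R) (hA : DistPref A)
    (hB : DistPref B) (hα : α ∩ F = α' ∩ F) (hβ : β ∩ F = β' ∩ F) (hzw : R z w)
    (hc : IsCompetingChain A B α' β' z w n c) {i : ℕ} (hi : i < n) : c i ∈ F := by
  have hlink := hR.isCompetingChain_links hA hB hα hβ hzw hc
  rcases i with _ | i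
  · have hl := hlink 0 (by have := hc.1.1; omega)
    rw [if_pos Even.zero] at hl
    exact hR.ball_fst hl (mem_closedBall_self dist_nonneg)
  · have hl := hlink i hi
    split_ifs at hl
    · exact hR.ball_snd hl (mem_closedBall_self dist_nonneg)
    · exact hR.ball_fst hl (mem_closedBall_self dist_nonneg)

theorem isCompetingChain_of_inter_eq (hR : IsLinkRelation A B α β F R) (hA : DistPref A)
    (hB : DistPref B) (hα : α ∩ F = α' ∩ F) (hβ : β ∩ F = β' ∩ F) (hzw : R z w)
    (hc : IsCompetingChain A B α' β' z w n c) : IsCompetingChain A B α β z w n c := by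
  refine ⟨⟨hc.1.1, fun i hi => ?_, hc.1.2.2⟩, hc.2⟩
  have hF := hR.mem_of_isCompetingChain hA hB hα hβ hzw hc hi
  have hmi := hc.1.2.1 i hi
  split_ifs at hmi ⊢
  · exact (mem_iff_of_inter_eq hα hF).2 hmi
  · exact (mem_iff_of_inter_eq hβ hF).2 hmi

end IsLinkRelation

end LinkRelation

section Flower

variable (A B : V d → V d → V d → Prop) (α β : Set (V d)) (z w : V d)

/-- Consecutive points of a competing chain, closed up under preferred replacements. The fields
only ask for chains ending just after `u` or `x`: there is no chain ending in the root `z`, whose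
"predecessor" is its partner `w`. -/
structure FlowerLink (u x : V d) : Prop where
  ball_fst : closedBall u (dist u x) ⊆ chainFlower A B α β z w
  ball_snd : closedBall x (dist u x) ⊆ chainFlower A B α β z w
  lastStep_snd : ∀ y ∈ β, A u y x → LastStepSnd A B α β z w u y
  lastStep_fst : ∀ q ∈ α, B x q u → LastStepFst A B α β z w x q

open Classical in
def partner : Option (V d) :=
  if h : ∃ w n, MatchedAt A B α β n z w then some h.choose else none

def matchFlower : Set (V d) :=
  match partner A B α β z with
  | none => univ
  | some w => chainFlower A B α β z w

variable {A B α β z w} {α' β' W : Set (V d)} {u x y q : V d}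

theorem FlowerLink.improve_snd (hA : DistPref A) (h : FlowerLink A B α β z w u x) (hy : y ∈ β)
    (hyx : A u y x) : FlowerLink A B α β z w u y where
  ball_fst := (closedBall_subset_closedBall
    (by simpa only [dist_comm u] using hA.dist_le hyx)).trans h.ball_fst
  ball_snd := by simpa only [dist_comm] using (h.lastStep_snd y hy hyx).closedBall_subset
  lastStep_snd y' hy' hy'y := h.lastStep_snd y' hy' (hA.trans hy'y hyx)
  lastStep_fst _ hq hqu := (h.lastStep_snd y hy hyx).extend hq hqu

theorem FlowerLink.improve_fst (hB : DistPref B) (h : FlowerLink A B α β z w u x) (hq : q ∈ α)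
    (hqu : B x q u) : FlowerLink A B α β z w q x where
  ball_fst := by simpa only [dist_comm] using (h.lastStep_fst q hq hqu).closedBall_subset
  ball_snd := (closedBall_subset_closedBall (hB.dist_le hqu)).trans h.ball_snd
  lastStep_snd _ hy hyq := (h.lastStep_fst q hq hqu).extend hy hyq
  lastStep_fst q' hq' hq'q := h.lastStep_fst q' hq' (hB.trans hq'q hqu)

theorem flowerLink_root (hz : z ∈ α) (hw : w ∈ β) : FlowerLink A B α β z w z w := by
  have hzw := isCompetingChain_pair (A := A) (B := B) hz hw (Or.inl rfl)
  have hlast : LastStepSnd A B α β z w z w := ⟨0, _, hzw, Even.zero, rfl, rfl⟩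
  refine ⟨?_, ?_, fun y hy hyw =>
    ⟨0, _, isCompetingChain_pair hz hy (Or.inr hyw), Even.zero, rfl, rfl⟩,
    fun q hq hqz => hlast.extend hq hqz⟩
  · simpa [dist_comm] using hzw.closedBall_zero_subset
  · simpa only [dist_comm] using hlast.closedBall_subset

theorem isLinkRelation_flowerLink (hA : DistPref A) (hB : DistPref B) :
    IsLinkRelation A B α β (chainFlower A B α β z w) (FlowerLink A B α β z w) where
  ball_fst h := h.ball_fst
  ball_snd h := h.ball_snd
  improve_snd h hy hyx := h.improve_snd hA hy hyx
  improve_fst h hq hqu := h.improve_fst hB hq hqu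

theorem partner_eq_some_iff (hA : DistPref A) :
    partner A B α β z = some w ↔ ∃ n, MatchedAt A B α β n z w := by
  unfold partner
  split_ifs with h
  · obtain ⟨n, hn⟩ := h.choose_spec
    refine ⟨fun hw => ⟨n, Option.some_injective _ hw ▸ hn⟩, fun ⟨m, hm⟩ => ?_⟩
    rw [hn.unique hA hm]
  · exact ⟨False.elim, fun hn => absurd ⟨w, hn⟩ h⟩

theorem matchFlower_of_partner_eq_none (h : partner A B α β z = none) :
    matchFlower A B α β z = univ := by
  rw [matchFlower, h]

theorem matchFlower_of_partner_eq_some (h : partner A B α β z = some w) :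
    matchFlower A B α β z = chainFlower A B α β z w := by
  rw [matchFlower, h]

theorem chainFlower_subset_of_inter_eq (hA : DistPref A) (hB : DistPref B)
    (hz : z ∈ α) (hw : w ∈ β) (hα : α ∩ chainFlower A B α β z w = α' ∩ chainFlower A B α β z w)
    (hβ : β ∩ chainFlower A B α β z w = β' ∩ chainFlower A B α β z w) :
    chainFlower A B α' β' z w ⊆ chainFlower A B α β z w :=
  iUnion₂_subset fun _ _ => iUnion_subset fun hc =>
    ((isLinkRelation_flowerLink hA hB).isCompetingChain_of_inter_eq hA hB hα hβ
      (flowerLink_root hz hw) hc).chainBalls_subset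

theorem partner_eq_and_matchFlower_subset (hA : DistPref A) (hB : DistPref B)
    (hα : α ∩ matchFlower A B α β z = α' ∩ matchFlower A B α β z)
    (hβ : β ∩ matchFlower A B α β z = β' ∩ matchFlower A B α β z) :
    partner A B α' β' z = partner A B α β z ∧
      matchFlower A B α' β' z ⊆ matchFlower A B α β z := by
  rcases hp : partner A B α β z with _ | w
  · rw [matchFlower_of_partner_eq_none hp, inter_univ, inter_univ] at hα hβ
    subst hα hβ
    exact ⟨hp, subset_rfl⟩
  · obtain ⟨n, hn⟩ := (partner_eq_some_iff hA).1 hp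
    have hz := matchStages_fst_subset hn.1
    have hw := matchStages_snd_subset hn.2.1
    rw [matchFlower_of_partner_eq_some hp] at hα hβ ⊢
    have hp' : partner A B α' β' z = some w := (partner_eq_some_iff hA).2
      ⟨n, (isLinkRelation_flowerLink hA hB).matchedAt_of_inter_eq hA hB hα hβ
        (flowerLink_root hz hw) hn⟩
    rw [matchFlower_of_partner_eq_some hp']
    exact ⟨hp', chainFlower_subset_of_inter_eq hA hB hz hw hα hβ⟩

theorem matchFlower_subset_iff_and_partner_eq (hA : DistPref A) (hB : DistPref B) :
    (matchFlower A B α β z ⊆ W ↔ matchFlower A B (α ∩ W) (β ∩ W) z ⊆ W) ∧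
      (matchFlower A B α β z ⊆ W → partner A B α β z = partner A B (α ∩ W) (β ∩ W) z) := by
  -- the locality lemma, with either configuration as the reference one
  have key : ∀ {α₀ β₀ α₁ β₁ : Set (V d)}, matchFlower A B α₀ β₀ z ⊆ W → α₀ ∩ W = α₁ ∩ W →
      β₀ ∩ W = β₁ ∩ W → partner A B α₁ β₁ z = partner A B α₀ β₀ z ∧
        matchFlower A B α₁ β₁ z ⊆ W := fun hF hα hβ =>
    have h := partner_eq_and_matchFlower_subset hA hB (inter_eq_inter_of_subset hF hα)
      (inter_eq_inter_of_subset hF hβ)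
    ⟨h.1, h.2.trans hF⟩
  refine ⟨⟨fun h => (key h ?_ ?_).2, fun h => (key h ?_ ?_).2⟩, fun h => (key h ?_ ?_).1.symm⟩ <;>
    simp [inter_assoc]

end Flower

section Bridge

variable {φ ψ W : Set (V d)} {z : V d}

theorem matchStages_eq_stages (φ ψ : Set (V d)) : matchStages prefPhi prefPsi φ ψ = stages φ ψ := by
  funext n
  induction n with
  | zero => rfl
  | succ n ih => simp only [matchStages, stages, ih]; rfl

theorem matchTau_eq_partner_fst (hz : z ∈ φ) :
    matchTau φ ψ z = partner prefPhi prefPsi φ ψ z := by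
  rw [matchTau, if_pos hz, ← matchStages_eq_stages]
  rfl

theorem matchTau_eq_partner_snd (hzφ : z ∉ φ) (hzψ : z ∈ ψ) :
    matchTau φ ψ z = partner prefPsi prefPhi ψ φ z := by
  have hswap : (fun p => ∃ n, MatchedAt prefPsi prefPhi ψ φ n z p) =
      fun p => ∃ n, MutualNN (stages φ ψ n).1 (stages φ ψ n).2 p z := by
    funext p
    simp only [matchedAt_swap]
    rw [← matchStages_eq_stages]
    rfl
  rw [matchTau, if_neg hzφ, if_pos hzψ, partner, hswap]

theorem flower_eq_matchFlower_fst (hz : z ∈ φ) :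
    flower φ ψ z = matchFlower prefPhi prefPsi φ ψ z := by
  rw [flower, if_pos hz, matchTau_eq_partner_fst hz]
  rfl

theorem flower_eq_matchFlower_snd (hzφ : z ∉ φ) (hzψ : z ∈ ψ) :
    flower φ ψ z = matchFlower prefPsi prefPhi ψ φ z := by
  rw [flower, if_neg hzφ, if_pos hzψ, matchTau_eq_partner_snd hzφ hzψ]
  rfl

theorem flower_subset_iff_and_matchTau_eq_fst (hz : z ∈ φ) (hzW : z ∈ W) :
    (flower φ ψ z ⊆ W ↔ flower (φ ∩ W) (ψ ∩ W) z ⊆ W) ∧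
      (flower φ ψ z ⊆ W → matchTau φ ψ z = matchTau (φ ∩ W) (ψ ∩ W) z) := by
  rw [flower_eq_matchFlower_fst hz, flower_eq_matchFlower_fst (mem_inter hz hzW),
    matchTau_eq_partner_fst hz, matchTau_eq_partner_fst (mem_inter hz hzW)]
  exact matchFlower_subset_iff_and_partner_eq distPref_prefPhi distPref_prefPsi

theorem flower_subset_iff_and_matchTau_eq_snd (hzφ : z ∉ φ) (hzψ : z ∈ ψ) (hzW : z ∈ W) :
    (flower φ ψ z ⊆ W ↔ flower (φ ∩ W) (ψ ∩ W) z ⊆ W) ∧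
      (flower φ ψ z ⊆ W → matchTau φ ψ z = matchTau (φ ∩ W) (ψ ∩ W) z) := by
  have hzφW : z ∉ φ ∩ W := fun h => hzφ h.1
  rw [flower_eq_matchFlower_snd hzφ hzψ, flower_eq_matchFlower_snd hzφW (mem_inter hzψ hzW),
    matchTau_eq_partner_snd hzφ hzψ, matchTau_eq_partner_snd hzφW (mem_inter hzψ hzW)]
  exact matchFlower_subset_iff_and_partner_eq distPref_prefPsi distPref_prefPhi

end Bridge

theorem statement7_general (d : ℕ) (φ ψ : Set (V d))
    (W : Set (V d)) (z : V d) (hz : z ∈ W) :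
    ((flower (insert z φ) ψ z ⊆ W ↔ flower (insert z φ ∩ W) (ψ ∩ W) z ⊆ W) ∧
      (flower (insert z φ) ψ z ⊆ W →
        matchTau (insert z φ) ψ z = matchTau (insert z φ ∩ W) (ψ ∩ W) z)) ∧
    ((flower φ (insert z ψ) z ⊆ W ↔ flower (φ ∩ W) (insert z ψ ∩ W) z ⊆ W) ∧
      (flower φ (insert z ψ) z ⊆ W →
        matchTau φ (insert z ψ) z = matchTau (φ ∩ W) (insert z ψ ∩ W) z)) := by
  refine ⟨flower_subset_iff_and_matchTau_eq_fst (mem_insert z φ) hz, ?_⟩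
  by_cases hzφ : z ∈ φ
  · exact flower_subset_iff_and_matchTau_eq_fst hzφ hz
  · exact flower_subset_iff_and_matchTau_eq_snd hzφ (mem_insert z ψ) hz

/-- The matching flower is a stopping set: for `z ∈ W`,
`F(φ^z, ψ, z) ⊆ W` iff `F(φ^z ∩ W, ψ ∩ W, z) ⊆ W`, and in that case the matching partners
of `z` agree; analogously when `z` is added to the second configuration. -/
theorem statement7 (d : ℕ) (φ ψ : Set (V d)) (hφ : LocFinite φ) (hψ : LocFinite ψ)
    (W : Set (V d)) (z : V d) (hz : z ∈ W) :
    ((flower (insert z φ) ψ z ⊆ W ↔ flower (insert z φ ∩ W) (ψ ∩ W) z ⊆ W) ∧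
      (flower (insert z φ) ψ z ⊆ W →
        matchTau (insert z φ) ψ z = matchTau (insert z φ ∩ W) (ψ ∩ W) z)) ∧
    ((flower φ (insert z ψ) z ⊆ W ↔ flower (φ ∩ W) (insert z ψ ∩ W) z ⊆ W) ∧
      (flower φ (insert z ψ) z ⊆ W →
        matchTau φ (insert z ψ) z = matchTau (φ ∩ W) (insert z ψ ∩ W) z)) :=
  statement7_general d φ ψ W z hz

end
end

section
/- Let Ψ be a stationary point process on ℝ^d and assume there exist c_1 > 0 and δ > 0 such that P(‖τ(ℤ^d, Ψ, 0)‖ > r) ≤ c_1 exp(−r^δ / c_1) for all r ≥ 0. Then there exists c_3 > 0 such that for all r > 0 and all x ∈ ℝ^d, P(r < ‖τ(ℤ^d, Ψ ∪ {x}, x) − x‖ < ∞) ≤ c_3 exp(−r^δ / c_3). -/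
open MeasureTheory Set Metric
open scoped ENNReal ENat NNReal Pointwise

noncomputable section

variable {d : ℕ}

/-!
If the added point `x` is matched to the lattice point `p`, then in the matching of `ℤ^d` with
`Ψ` alone the partner of `p` is at least as far from `p` as `x` is: adding points to the second
configuration can only improve the partners of the first one. So the event is covered by the
events that some `p ∈ ℤ^d` is matched in `τ(ℤ^d, Ψ)` at distance larger than
`max r (‖p - x‖ / 2)`. Since `τ` commutes with translations by lattice vectors and `Ψ` is
stationary, each of these has the probability of the corresponding tail event at the origin, and
the union bound leaves `exp (-r^δ / 2c₁)` times the lattice sum `∑ₚ exp (-‖p - x‖^δ / c)`, which is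
bounded uniformly in `x` by counting lattice points in spherical shells. Stationarity only applies
to measurable events, so the tail event at the origin has to be shown measurable for the counting
σ-algebra; this is done by enumerating the points of a locally finite configuration through a
countable basis of open sets, stage by stage of the matching algorithm.
-/

section Preference

lemma lexLT_asymm {x y : V d} (h : lexLT x y) : ¬ lexLT y x := by
  rintro ⟨k, hk, hkl⟩
  obtain ⟨i, hi, hij⟩ := h
  rcases lt_trichotomy i k with hik | rfl | hki
  · exact (hkl i hik ▸ hi).false
  · exact (hi.trans hk).false
  · exact (hij k hki ▸ hk).false

lemma prefPhi_asymm {p x y : V d} (h : prefPhi p x y) : ¬ prefPhi p y x := by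
  rcases h with h | ⟨e, l⟩ <;> rintro (h' | ⟨e', l'⟩)
  all_goals first | linarith | exact lexLT_asymm l l'

lemma prefPsi_asymm {x p q : V d} (h : prefPsi x p q) : ¬ prefPsi x q p := by
  rcases h with h | ⟨e, l⟩ <;> rintro (h' | ⟨e', l'⟩)
  all_goals first | linarith | exact lexLT_asymm l l'

end Preference

section Stages

variable {φ ψ : Set (V d)} {n m : ℕ} {p q x y z : V d}

lemma stages_fst_subset (n : ℕ) : (stages φ ψ n).1 ⊆ φ := by
  induction n with
  | zero => exact subset_rfl
  | succ n ih => exact sdiff_subset.trans ih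

lemma stages_snd_subset (n : ℕ) : (stages φ ψ n).2 ⊆ ψ := by
  induction n with
  | zero => exact subset_rfl
  | succ n ih => exact sdiff_subset.trans ih

lemma stages_fst_antitone : Antitone fun n => (stages φ ψ n).1 :=
  antitone_nat_of_succ_le fun _ => sdiff_subset

lemma stages_snd_antitone : Antitone fun n => (stages φ ψ n).2 :=
  antitone_nat_of_succ_le fun _ => sdiff_subset

lemma MutualNN.notMem_stages_fst_succ (h : MutualNN (stages φ ψ n).1 (stages φ ψ n).2 p x) :
    p ∉ (stages φ ψ (n + 1)).1 :=
  fun hp => hp.2 ⟨x, h⟩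

lemma MutualNN.notMem_stages_snd_succ (h : MutualNN (stages φ ψ n).1 (stages φ ψ n).2 p x) :
    x ∉ (stages φ ψ (n + 1)).2 :=
  fun hx => hx.2 ⟨p, h⟩

lemma exists_mutualNN_of_notMem_stages_fst (hp : p ∈ φ) (h : p ∉ (stages φ ψ n).1) :
    ∃ m < n, ∃ x, MutualNN (stages φ ψ m).1 (stages φ ψ m).2 p x := by
  induction n with
  | zero => exact absurd hp h
  | succ n ih =>
    by_cases hn : p ∈ (stages φ ψ n).1
    · exact ⟨n, n.lt_succ_self, not_not.mp fun hc => h ⟨hn, hc⟩⟩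
    · obtain ⟨m, hm, hx⟩ := ih hn
      exact ⟨m, hm.trans n.lt_succ_self, hx⟩

lemma exists_mutualNN_of_notMem_stages_snd (hx : x ∈ ψ) (h : x ∉ (stages φ ψ n).2) :
    ∃ m < n, ∃ p, MutualNN (stages φ ψ m).1 (stages φ ψ m).2 p x := by
  induction n with
  | zero => exact absurd hx h
  | succ n ih =>
    by_cases hn : x ∈ (stages φ ψ n).2
    · exact ⟨n, n.lt_succ_self, not_not.mp fun hc => h ⟨hn, hc⟩⟩
    · obtain ⟨m, hm, hp⟩ := ih hn
      exact ⟨m, hm.trans n.lt_succ_self, hp⟩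

lemma mutualNN_stages_right_unique (h : MutualNN (stages φ ψ n).1 (stages φ ψ n).2 p x)
    (h' : MutualNN (stages φ ψ m).1 (stages φ ψ m).2 p y) : x = y := by
  rcases lt_trichotomy n m with hnm | rfl | hmn
  · exact absurd (stages_fst_antitone hnm h'.1) h.notMem_stages_fst_succ
  · by_contra hxy
    exact prefPhi_asymm (h.2.2.1 y h'.2.1 (Ne.symm hxy)) (h'.2.2.1 x h.2.1 hxy)
  · exact absurd (stages_fst_antitone hmn h.1) h'.notMem_stages_fst_succ

lemma mutualNN_stages_left_unique (h : MutualNN (stages φ ψ n).1 (stages φ ψ n).2 p x)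
    (h' : MutualNN (stages φ ψ m).1 (stages φ ψ m).2 q x) : p = q := by
  rcases lt_trichotomy n m with hnm | rfl | hmn
  · exact absurd (stages_snd_antitone hnm h'.2.1) h.notMem_stages_snd_succ
  · by_contra hpq
    exact prefPsi_asymm (h.2.2.2 q h'.1 (Ne.symm hpq)) (h'.2.2.2 p h.1 hpq)
  · exact absurd (stages_snd_antitone hmn h.2.1) h'.notMem_stages_snd_succ

lemma matchTau_eq_some_iff_of_mem_fst (hz : z ∈ φ) :
    matchTau φ ψ z = some x ↔ ∃ n, MutualNN (stages φ ψ n).1 (stages φ ψ n).2 z x := by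
  unfold matchTau
  rw [if_pos hz]
  split_ifs with hex
  · obtain ⟨m, hm⟩ := hex.choose_spec
    refine ⟨fun h => ?_, fun ⟨n, hn⟩ => congrArg some (mutualNN_stages_right_unique hm hn)⟩
    exact ⟨m, Option.some.inj h ▸ hm⟩
  · exact ⟨fun h => (nomatch h), fun ⟨n, hn⟩ => hex ⟨x, n, hn⟩⟩

lemma matchTau_eq_some_iff_of_mem_snd (hzφ : z ∉ φ) (hz : z ∈ ψ) :
    matchTau φ ψ z = some p ↔ ∃ n, MutualNN (stages φ ψ n).1 (stages φ ψ n).2 p z := by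
  unfold matchTau
  rw [if_neg hzφ, if_pos hz]
  split_ifs with hex
  · obtain ⟨m, hm⟩ := hex.choose_spec
    refine ⟨fun h => ?_, fun ⟨n, hn⟩ => congrArg some (mutualNN_stages_left_unique hm hn)⟩
    exact ⟨m, Option.some.inj h ▸ hm⟩
  · exact ⟨fun h => (nomatch h), fun ⟨n, hn⟩ => hex ⟨p, n, hn⟩⟩

lemma matchTau_of_notMem (hzφ : z ∉ φ) (hzψ : z ∉ ψ) : matchTau φ ψ z = some z := by
  simp [matchTau, hzφ, hzψ]

lemma matchTau_of_mem_of_mem (hφ : z ∈ φ) (hψ : z ∈ ψ) : matchTau φ ψ z = some z := by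
  refine (matchTau_eq_some_iff_of_mem_fst hφ).2 ⟨0, hφ, hψ, fun y _ hy => ?_, fun q _ hq => ?_⟩
  · exact Or.inl (by simpa using dist_pos.2 hy)
  · exact Or.inl (by simpa using dist_pos.2 hq)

lemma mem_fst_of_matchTau_eq_some (hzφ : z ∉ φ) (hz : z ∈ ψ) (h : matchTau φ ψ z = some p) :
    p ∈ φ := by
  obtain ⟨n, hn⟩ := (matchTau_eq_some_iff_of_mem_snd hzφ hz).1 h
  exact stages_fst_subset n hn.1

/-- If `q` preferred its old partner `w` to its new partner `z`, then `w` was taken earlier in the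
new matching by some `q₂` that `w` prefers to `q`; so in the old matching `q₂` was taken before
`w` met `q`, by some `w₂` that `q₂` prefers to `w`. This is the same situation at an earlier stage
of the new matching, whence the induction on the stage at which `q` meets `z`. -/
lemma not_prefPhi_of_mutualNN_of_subset {ψ' : Set (V d)} (hψ : ψ ⊆ ψ') {a b : ℕ} {q w z : V d}
    (hw : MutualNN (stages φ ψ a).1 (stages φ ψ a).2 q w)
    (hz : MutualNN (stages φ ψ' b).1 (stages φ ψ' b).2 q z) :
    ¬ prefPhi q w z := by
  induction b using Nat.strong_induction_on generalizing a q w z with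
  | _ b ih =>
  intro hpref
  have hwb : w ∉ (stages φ ψ' b).2 := fun hmem =>
    prefPhi_asymm hpref (hz.2.2.1 w hmem (by rintro rfl; exact prefPhi_asymm hpref hpref))
  obtain ⟨b', hb', q₂, hq₂⟩ :=
    exists_mutualNN_of_notMem_stages_snd (hψ (stages_snd_subset a hw.2.1)) hwb
  have hq₂q : q₂ ≠ q := by
    rintro rfl
    exact hq₂.notMem_stages_fst_succ (stages_fst_antitone hb' hz.1)
  have hq₂a : q₂ ∉ (stages φ ψ a).1 := fun hmem =>
    prefPsi_asymm (hq₂.2.2.2 q (stages_fst_antitone hb'.le hz.1) hq₂q.symm)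
      (hw.2.2.2 q₂ hmem hq₂q)
  obtain ⟨a', ha', w₂, hw₂⟩ :=
    exists_mutualNN_of_notMem_stages_fst (stages_fst_subset b' hq₂.1) hq₂a
  have hw₂w : w₂ ≠ w := by
    rintro rfl
    exact hw₂.notMem_stages_snd_succ (stages_snd_antitone ha' hw.2.1)
  exact ih b' hb' hw₂ hq₂ (hw₂.2.2.1 w (stages_snd_antitone ha'.le hw.2.1) hw₂w.symm)

lemma dist_le_of_matchTau_insert (hxφ : x ∉ φ) (h : matchTau φ (insert x ψ) x = some p)
    (hp : matchTau φ ψ p = some z) : dist x p ≤ dist z p := by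
  obtain ⟨b, hb⟩ := (matchTau_eq_some_iff_of_mem_snd hxφ (mem_insert x ψ)).1 h
  obtain ⟨a, ha⟩ := (matchTau_eq_some_iff_of_mem_fst (stages_fst_subset b hb.1)).1 hp
  exact not_lt.1 fun hlt => not_prefPhi_of_mutualNN_of_subset (subset_insert x ψ) ha hb (.inl hlt)

end Stages

section Translation

variable {φ ψ A B : Set (V d)} {p x y z v : V d}

lemma mem_shift : z ∈ shift ψ v ↔ z - v ∈ ψ := by
  simp [shift, Set.image_add_right, sub_eq_add_neg]

lemma lexLT_add_right : lexLT (x + v) (z + v) ↔ lexLT x z := by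
  simp [lexLT]

lemma prefPhi_add_right :
    prefPhi (p + v) (x + v) (y + v) ↔ prefPhi p x y := by
  simp only [prefPhi, dist_add_right, lexLT_add_right]

lemma prefPsi_add_right {q : V d} :
    prefPsi (x + v) (p + v) (q + v) ↔ prefPsi x p q := by
  simp only [prefPsi, dist_add_right, lexLT_add_right]

lemma mutualNN_shift : MutualNN (shift A v) (shift B v) p x ↔ MutualNN A B (p - v) (x - v) := by
  obtain ⟨p, rfl⟩ : ∃ p', p = p' + v := ⟨p - v, by simp⟩
  obtain ⟨x, rfl⟩ : ∃ x', x = x' + v := ⟨x - v, by simp⟩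
  simp only [MutualNN, shift, Set.forall_mem_image, (add_left_injective v).mem_set_image, ne_eq,
    add_left_inj, prefPhi_add_right, prefPsi_add_right, add_sub_cancel_right]

lemma stages_shift (n : ℕ) :
    stages (shift φ v) (shift ψ v) n = (shift (stages φ ψ n).1 v, shift (stages φ ψ n).2 v) := by
  induction n with
  | zero => rfl
  | succ n ih =>
    ext z <;> simp only [stages, ih, mem_sdiff, mem_shift, mem_ofPred_eq, mutualNN_shift] <;>
      exact and_congr_right fun _ =>
        not_congr ⟨fun ⟨y, hy⟩ => ⟨_, hy⟩, fun ⟨y, hy⟩ => ⟨y + v, by simpa using hy⟩⟩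

lemma matchTau_shift :
    matchTau (shift φ v) (shift ψ v) z = (matchTau φ ψ (z - v)).map (· + v) := by
  have hmap (o : Option (V d)) (a : V d) : o.map (· + v) = some a ↔ o = some (a - v) := by
    cases o <;> simp [eq_sub_iff_add_eq]
  by_cases hφ : z - v ∈ φ
  · have hφ' : z ∈ shift φ v := mem_shift.2 hφ
    refine Option.ext fun a => ?_
    simp only [hmap, matchTau_eq_some_iff_of_mem_fst hφ, matchTau_eq_some_iff_of_mem_fst hφ',
      stages_shift, mutualNN_shift]
  by_cases hψ : z - v ∈ ψ
  · have hφ' : z ∉ shift φ v := fun h => hφ (mem_shift.1 h)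
    have hψ' : z ∈ shift ψ v := mem_shift.2 hψ
    refine Option.ext fun a => ?_
    simp only [hmap, matchTau_eq_some_iff_of_mem_snd hφ hψ, matchTau_eq_some_iff_of_mem_snd hφ' hψ',
      stages_shift, mutualNN_shift]
  · rw [matchTau_of_notMem hφ hψ, matchTau_of_notMem (mt mem_shift.1 hφ) (mt mem_shift.1 hψ)]
    simp

lemma locFinite_shift (h : LocFinite ψ) (v : V d) : LocFinite (shift ψ v) := by
  intro r
  refine ((h (r + ‖v‖)).image (· + v)).subset ?_
  rintro _ ⟨⟨y, hy, rfl⟩, hr⟩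
  refine ⟨y, ⟨hy, ?_⟩, rfl⟩
  rw [mem_closedBall_zero_iff] at hr ⊢
  calc ‖y‖ = ‖(y + v) - v‖ := by rw [add_sub_cancel_right]
    _ ≤ ‖y + v‖ + ‖v‖ := norm_sub_le _ _
    _ ≤ r + ‖v‖ := by linarith

lemma intVec_add (k m : Fin d → ℤ) : intVec (k + m) = intVec k + intVec m := by
  ext i
  simp [intVec]

lemma intVec_sub (k m : Fin d → ℤ) : intVec (k - m) = intVec k - intVec m := by
  ext i
  simp [intVec]

lemma neg_mem_lattice (hv : v ∈ lattice d) : -v ∈ lattice d := by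
  obtain ⟨k, rfl⟩ := hv
  exact ⟨-k, by ext i; simp⟩

lemma shift_lattice (hv : v ∈ lattice d) : shift (lattice d) v = lattice d := by
  obtain ⟨m, rfl⟩ := hv
  ext z
  rw [mem_shift]
  constructor
  · rintro ⟨k, hk⟩
    refine ⟨k + m, ?_⟩
    change intVec k = z - intVec m at hk
    change intVec (k + m) = z
    rw [intVec_add, hk, sub_add_cancel]
  · rintro ⟨k, rfl⟩
    exact ⟨k - m, intVec_sub k m⟩

lemma matchTau_lattice_shift_neg (hy : y ∈ lattice d) :
    matchTau (lattice d) (shift ψ (-y)) 0 = (matchTau (lattice d) ψ y).map (· - y) := by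
  have := matchTau_shift (φ := lattice d) (ψ := ψ) (v := -y) (z := 0)
  simpa [shift_lattice (neg_mem_lattice hy), sub_eq_add_neg] using this

end Translation

section Measurability

open TopologicalSpace

/-- `Set (V d)` already carries the product σ-algebra; this synonym carries the counting one. -/
def Config (d : ℕ) := Set (V d)

instance : MeasurableSpace (Config d) := configSA d

def Config.toSet (ψ : Config d) : Set (V d) := ψ

abbrev BasisSet (d : ℕ) := ↥(countableBasis (V d))

variable {ψ : Config d} {U : Set (V d)} {x : V d}

lemma measurable_encard_inter_eq {B : Set (V d)} (hB : MeasurableSet B) (n : ℕ) :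
    Measurable fun ψ : Config d => (ψ.toSet ∩ B).encard = n :=
  measurableSet_setOfPred.1 (MeasurableSpace.measurableSet_generateFrom ⟨B, n, hB, rfl⟩)

open Classical in
def pointIn (U : Set (V d)) (ψ : Config d) : V d :=
  if h : (ψ.toSet ∩ U).encard = 1 then (encard_eq_one.1 h).choose else 0

lemma inter_eq_singleton_pointIn (h : (ψ.toSet ∩ U).encard = 1) :
    ψ.toSet ∩ U = {pointIn U ψ} := by
  rw [pointIn, dif_pos h]
  exact (encard_eq_one.1 h).choose_spec

lemma pointIn_mem (h : (ψ.toSet ∩ U).encard = 1) : pointIn U ψ ∈ ψ.toSet :=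
  (inter_eq_singleton_pointIn h ▸ mem_singleton _ : pointIn U ψ ∈ ψ.toSet ∩ U).1

lemma measurable_pointIn (U : BasisSet d) : Measurable (pointIn (d := d) U) := by
  intro E hE
  have hU : MeasurableSet (U : Set (V d)) := (isOpen_of_mem_countableBasis U.2).measurableSet
  have : pointIn U ⁻¹' E = {ψ : Config d | (ψ.toSet ∩ U).encard = 1 ∧
      (ψ.toSet ∩ (U ∩ E)).encard = 1 ∨ ¬ (ψ.toSet ∩ U).encard = 1 ∧ (0 : V d) ∈ E} := by
    ext ψ
    by_cases h : (ψ.toSet ∩ U).encard = 1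
    · rw [mem_preimage, mem_ofPred_eq, ← inter_assoc, inter_eq_singleton_pointIn h]
      by_cases hE : pointIn U ψ ∈ E <;> simp [hE]
    · simp [pointIn, h]
  rw [this]
  exact measurableSet_setOfPred.2 (((measurable_encard_inter_eq hU 1).and
    (measurable_encard_inter_eq (hU.inter hE) 1)).or
    ((measurable_encard_inter_eq hU 1).not.and measurable_const))

lemma LocFinite.exists_mem_countableBasis_inter_eq {ψ : Set (V d)} (hψ : LocFinite ψ)
    (hx : x ∈ ψ) : ∃ U ∈ countableBasis (V d), ψ ∩ U = {x} := by
  set S := (ψ ∩ closedBall 0 (‖x‖ + 1)) \ {x}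
  have hS : IsClosed S := ((hψ _).subset sdiff_subset).isClosed
  obtain ⟨U, hU, hxU, hUS⟩ := (isBasis_countableBasis (V d)).exists_subset_of_mem_open
    (show x ∈ ball x 1 ∩ Sᶜ from ⟨mem_ball_self one_pos, fun h => h.2 rfl⟩)
    (isOpen_ball.inter hS.isOpen_compl)
  refine ⟨U, hU, subset_antisymm (fun y ⟨hy, hyU⟩ => ?_) (singleton_subset_iff.2 ⟨hx, hxU⟩)⟩
  have hyx : dist y x < 1 := (hUS hyU).1
  have hy' : ‖y‖ ≤ ‖x‖ + 1 := by
    linarith [norm_le_norm_add_norm_sub' y x, dist_eq_norm y x]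
  by_contra hne
  exact (hUS hyU).2 ⟨⟨hy, mem_closedBall_zero_iff.2 hy'⟩, hne⟩

lemma LocFinite.exists_pointIn_eq (hψ : LocFinite ψ.toSet) (hx : x ∈ ψ.toSet) :
    ∃ U : BasisSet d, (ψ.toSet ∩ U).encard = 1 ∧ pointIn U ψ = x := by
  obtain ⟨U, hU, hUx⟩ := hψ.exists_mem_countableBasis_inter_eq hx
  have h : (ψ.toSet ∩ U).encard = 1 := by rw [hUx, encard_singleton]
  exact ⟨⟨U, hU⟩, h, by simpa [hUx] using (inter_eq_singleton_pointIn h).symm⟩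

lemma LocFinite.forall_mem_iff (hψ : LocFinite ψ.toSet) {R : V d → Prop} :
    (∀ y ∈ ψ.toSet, R y) ↔ ∀ U : BasisSet d, (ψ.toSet ∩ U).encard = 1 → R (pointIn U ψ) := by
  refine ⟨fun h U hU => h _ (pointIn_mem hU), fun h y hy => ?_⟩
  obtain ⟨U, hU, rfl⟩ := hψ.exists_pointIn_eq hy
  exact h U hU

lemma LocFinite.exists_mem_iff (hψ : LocFinite ψ.toSet) {R : V d → Prop} :
    (∃ y ∈ ψ.toSet, R y) ↔ ∃ U : BasisSet d, (ψ.toSet ∩ U).encard = 1 ∧ R (pointIn U ψ) := by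
  simpa only [not_forall, Classical.not_imp, not_not, exists_prop] using
    not_congr (hψ.forall_mem_iff (R := (¬ R ·)))

lemma measurable_locFinite : Measurable fun ψ : Config d => LocFinite ψ.toSet := by
  have : (fun ψ : Config d => LocFinite ψ.toSet) =
      fun ψ => ∀ m : ℕ, ∃ j : ℕ, (ψ.toSet ∩ closedBall 0 m).encard = j := by
    ext ψ
    refine ⟨fun h m => ⟨_, (h m).encard_eq_coe_toFinset_card⟩, fun h r => ?_⟩
    obtain ⟨j, hj⟩ := h ⌈r⌉₊
    exact (finite_of_encard_eq_coe hj).subset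
      (inter_subset_inter_right _ (closedBall_subset_closedBall (Nat.le_ceil r)))
  rw [this]
  exact .forall fun m => .exists fun j => measurable_encard_inter_eq measurableSet_closedBall j

variable {α : Type*} [MeasurableSpace α]

@[fun_prop]
lemma Measurable.locFinite {f : α → Config d} (hf : Measurable f) :
    Measurable fun a => LocFinite (f a).toSet :=
  measurable_locFinite.comp hf

@[fun_prop]
lemma Measurable.pointIn (U : BasisSet d) {f : α → Config d} (hf : Measurable f) :
    Measurable fun a => pointIn U (f a) :=
  (measurable_pointIn U).comp hf

@[fun_prop]
lemma Measurable.encard_inter_eq (U : BasisSet d) (n : ℕ) {f : α → Config d} (hf : Measurable f) :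
    Measurable fun a => ((f a).toSet ∩ U).encard = n :=
  (measurable_encard_inter_eq (isOpen_of_mem_countableBasis U.2).measurableSet n).comp hf

@[fun_prop]
lemma Measurable.prefPhi {f g h : α → V d} (hf : Measurable f) (hg : Measurable g)
    (hh : Measurable h) : Measurable fun a => prefPhi (f a) (g a) (h a) := by
  unfold _root_.prefPhi lexLT
  fun_prop

@[fun_prop]
lemma Measurable.prefPsi {f g h : α → V d} (hf : Measurable f) (hg : Measurable g)
    (hh : Measurable h) : Measurable fun a => prefPsi (f a) (g a) (h a) := by
  unfold _root_.prefPsi lexLT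
  fun_prop

@[fun_prop]
lemma Measurable.mem_lattice {f : α → V d} (hf : Measurable f) :
    Measurable fun a => f a ∈ lattice d :=
  (countable_range _).measurableSet.mem.comp hf

/- The stages of `τ(ℤ^d, ψ, ·)` as predicates of `ψ` and a point, restricted to locally finite `ψ`:
there the quantifiers over the points of `ψ` range over countably many `pointIn U ψ`
(`LocFinite.forall_mem_iff`), which makes these predicates measurable. -/
def StageFst (n : ℕ) (q : Config d × V d) : Prop :=
  LocFinite q.1.toSet ∧ q.2 ∈ (stages (lattice d) q.1.toSet n).1

def StageSnd (n : ℕ) (q : Config d × V d) : Prop :=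
  LocFinite q.1.toSet ∧ q.2 ∈ (stages (lattice d) q.1.toSet n).2

def StageMutual (n : ℕ) (t : Config d × V d × V d) : Prop :=
  LocFinite t.1.toSet ∧
    MutualNN (stages (lattice d) t.1.toSet n).1 (stages (lattice d) t.1.toSet n).2 t.2.1 t.2.2

lemma stageMutual_iff {n : ℕ} {t : Config d × V d × V d} :
    StageMutual n t ↔ StageFst n (t.1, t.2.1) ∧ StageSnd n (t.1, t.2.2) ∧
      (∀ U : BasisSet d, (t.1.toSet ∩ U).encard = 1 → StageSnd n (t.1, pointIn U t.1) →
        pointIn U t.1 ≠ t.2.2 → prefPhi t.2.1 t.2.2 (pointIn U t.1)) ∧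
      ∀ k, StageFst n (t.1, intVec k) → intVec k ≠ t.2.1 → prefPsi t.2.2 t.2.1 (intVec k) := by
  obtain ⟨ψ, p, x⟩ := t
  simp only [StageMutual, StageFst, StageSnd, MutualNN]
  constructor
  · rintro ⟨hψ, hp, hx, hφ, hψ'⟩
    exact ⟨⟨hψ, hp⟩, ⟨hψ, hx⟩, fun U _ hU => hφ _ hU.2, fun k hk => hψ' _ hk.2⟩
  · rintro ⟨⟨hψ, hp⟩, ⟨-, hx⟩, hφ, hψ'⟩
    refine ⟨hψ, hp, hx, fun y hy => ?_, fun q hq => ?_⟩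
    · have := (hψ.forall_mem_iff (R := fun y => y ∈ (stages (lattice d) ψ.toSet n).2 → y ≠ x →
        prefPhi p x y)).2 fun U hU hy => hφ U hU ⟨hψ, hy⟩
      exact this y (stages_snd_subset n hy) hy
    · obtain ⟨k, rfl⟩ := stages_fst_subset n hq
      exact hψ' k ⟨hψ, hq⟩

lemma measurable_stageMutual_of {n : ℕ} (hfst : Measurable (StageFst (d := d) n))
    (hsnd : Measurable (StageSnd (d := d) n)) : Measurable (StageMutual (d := d) n) := by
  rw [show StageMutual (d := d) n = _ from funext fun t => propext stageMutual_iff]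
  fun_prop

lemma stageFst_succ_iff {n : ℕ} {q : Config d × V d} :
    StageFst (n + 1) q ↔ StageFst n q ∧
      ¬ ∃ U : BasisSet d, (q.1.toSet ∩ U).encard = 1 ∧ StageMutual n (q.1, q.2, pointIn U q.1) := by
  obtain ⟨ψ, p⟩ := q
  simp only [StageFst, StageMutual, stages, mem_sdiff, mem_ofPred_eq, and_assoc]
  refine and_congr_right fun hψ => and_congr_right fun _ => not_congr ?_
  simp only [hψ, true_and]
  rw [← hψ.exists_mem_iff]
  exact ⟨fun ⟨x, h⟩ => ⟨x, stages_snd_subset n h.2.1, h⟩, fun ⟨x, _, h⟩ => ⟨x, h⟩⟩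

lemma stageSnd_succ_iff {n : ℕ} {q : Config d × V d} :
    StageSnd (n + 1) q ↔ StageSnd n q ∧ ¬ ∃ k, StageMutual n (q.1, intVec k, q.2) := by
  obtain ⟨ψ, x⟩ := q
  simp only [StageSnd, StageMutual, stages, mem_sdiff, mem_ofPred_eq, and_assoc]
  refine and_congr_right fun hψ => and_congr_right fun _ => not_congr ?_
  simp only [hψ, true_and]
  refine ⟨fun ⟨p, h⟩ => ?_, fun ⟨k, h⟩ => ⟨_, h⟩⟩
  obtain ⟨k, rfl⟩ := stages_fst_subset n h.1
  exact ⟨k, h⟩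

lemma measurable_stages (n : ℕ) :
    Measurable (StageFst (d := d) n) ∧ Measurable (StageSnd (d := d) n) := by
  induction n with
  | zero =>
    have hsnd : StageSnd (d := d) 0 = fun q => LocFinite q.1.toSet ∧
        ∃ U : BasisSet d, (q.1.toSet ∩ U).encard = 1 ∧ pointIn U q.1 = q.2 := by
      ext ⟨ψ, x⟩
      exact and_congr_right fun hψ =>
        ⟨fun hx => hψ.exists_pointIn_eq hx, fun ⟨U, hU, hUx⟩ => hUx ▸ pointIn_mem hU⟩
    rw [hsnd, show StageFst (d := d) 0 = fun q => LocFinite q.1.toSet ∧ q.2 ∈ lattice d from rfl]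
    exact ⟨by fun_prop, by fun_prop⟩
  | succ n ih =>
    obtain ⟨hfst, hsnd⟩ := ih
    have hmut := measurable_stageMutual_of hfst hsnd
    rw [show StageFst (d := d) (n + 1) = _ from funext fun q => propext stageFst_succ_iff,
      show StageSnd (d := d) (n + 1) = _ from funext fun q => propext stageSnd_succ_iff]
    exact ⟨by fun_prop, by fun_prop⟩

def matchTailEvent (d : ℕ) (t : ℝ) : Set (Set (V d)) :=
  {ψ | LocFinite ψ ∧ ∀ y, matchTau (lattice d) ψ 0 = some y → t < ‖y‖}

lemma measurableSet_matchTailEvent (t : ℝ) : MeasurableSet[configSA d] (matchTailEvent d t) := by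
  have h0 : (0 : V d) ∈ lattice d := ⟨0, by ext i; simp⟩
  have hmut (n : ℕ) := measurable_stageMutual_of (measurable_stages (d := d) n).1
    (measurable_stages n).2
  have : matchTailEvent d t = {ψ : Config d | LocFinite ψ.toSet ∧ ∀ n, ∀ U : BasisSet d,
      (ψ.toSet ∩ U).encard = 1 → StageMutual n (ψ, 0, pointIn U ψ) → t < ‖pointIn U ψ‖} := by
    ext ψ
    refine and_congr_right fun hψ => ?_
    simp only [matchTau_eq_some_iff_of_mem_fst h0, StageMutual, Config.toSet, hψ, true_and]
    refine ⟨fun h n U _ hU => h _ ⟨n, hU⟩, fun h y ⟨n, hn⟩ => ?_⟩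
    obtain ⟨U, hU, rfl⟩ := LocFinite.exists_pointIn_eq (ψ := ψ) hψ (stages_snd_subset n hn.2.1)
    exact h n U hU hn
  show MeasurableSet (α := Config d) _
  rw [this]
  exact measurableSet_setOfPred.2 (by fun_prop)

end Measurability

section LatticeSum

open Filter Topology Real

lemma abs_sub_le_dist_intVec (k : Fin d → ℤ) (x : V d) (i : Fin d) :
    |(k i : ℝ) - x i| ≤ dist (intVec k) x := by
  simpa [intVec, Real.dist_eq] using PiLp.dist_apply_le (intVec k) x i

lemma encard_floor_dist_eq_le (x : V d) (m : ℕ) :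
    {k : Fin d → ℤ | ⌊dist (intVec k) x⌋₊ = m}.encard ≤ ((2 * m + 3) ^ d : ℕ) := by
  let box := Fintype.piFinset fun i : Fin d => Finset.Icc (⌊x i⌋ - (m + 1)) (⌊x i⌋ + (m + 1))
  have hsub : {k : Fin d → ℤ | ⌊dist (intVec k) x⌋₊ = m} ⊆ box := by
    intro k (hk : ⌊dist (intVec k) x⌋₊ = m)
    have hlt : dist (intVec k) x < m + 1 := hk ▸ Nat.lt_floor_add_one _
    rw [Finset.mem_coe, Fintype.mem_piFinset]
    intro i
    have := abs_lt.1 ((abs_sub_le_dist_intVec k x i).trans_lt hlt)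
    have h1 := Int.floor_le (x i)
    have h2 := Int.lt_floor_add_one (x i)
    rw [Finset.mem_Icc]
    constructor
    · have : ((⌊x i⌋ - (m + 1) : ℤ) : ℝ) < k i := by push_cast; linarith
      exact_mod_cast this.le
    · have : (k i : ℝ) < ((⌊x i⌋ + (m + 1) + 1 : ℤ) : ℝ) := by push_cast; linarith
      exact Int.lt_add_one_iff.1 (by exact_mod_cast this)
  have hcard (i : Fin d) : (Finset.Icc (⌊x i⌋ - (m + 1)) (⌊x i⌋ + (m + 1))).card = 2 * m + 3 := by
    rw [Int.card_Icc]
    omega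
  calc _ ≤ (box : Set (Fin d → ℤ)).encard := encard_le_encard hsub
    _ = ((2 * m + 3) ^ d : ℕ) := by
      rw [encard_coe_eq_coe_finsetCard, Fintype.card_piFinset]
      simp [hcard]

lemma summable_pow_mul_exp_neg_rpow {c δ : ℝ} (hc : 0 < c) (hδ : 0 < δ) :
    Summable fun m : ℕ => (((2 * m + 3) ^ d : ℕ) : ℝ) * exp (-(m : ℝ) ^ δ / c) := by
  have hlim : Tendsto (fun t : ℝ => t ^ (d + 2) * exp (-t ^ δ / c)) atTop (𝓝 0) := by
    refine ((tendsto_rpow_mul_exp_neg_mul_atTop_nhds_zero ((d + 2) / δ) c⁻¹ (inv_pos.2 hc)).comp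
      (tendsto_rpow_atTop hδ)).congr' ?_
    filter_upwards [eventually_ge_atTop 0] with t ht
    rw [Function.comp_apply, ← rpow_mul ht, mul_div_cancel₀ _ hδ.ne', neg_mul, inv_mul_eq_div]
    norm_cast
    rw [neg_div]
  have hev : ∀ᶠ m : ℕ in atTop, 1 ≤ (m : ℝ) ∧ (m : ℝ) ^ (d + 2) * exp (-(m : ℝ) ^ δ / c) < 1 :=
    (tendsto_natCast_atTop_atTop.eventually_ge_atTop 1).and
      ((hlim.comp tendsto_natCast_atTop_atTop).eventually (gt_mem_nhds one_pos))
  refine summable_of_isBigO_nat (summable_nat_pow_inv.2 one_lt_two) (.of_bound (5 ^ d) ?_)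
  filter_upwards [hev] with m ⟨hm, hlt⟩
  have hm0 : (0 : ℝ) < m := by linarith
  rw [Real.norm_of_nonneg (by positivity), Real.norm_of_nonneg (by positivity)]
  calc (((2 * m + 3) ^ d : ℕ) : ℝ) * exp (-(m : ℝ) ^ δ / c)
      ≤ (5 * m) ^ d * exp (-(m : ℝ) ^ δ / c) := by
        push_cast
        gcongr
        linarith
    _ = 5 ^ d * ((m : ℝ) ^ (d + 2) * exp (-(m : ℝ) ^ δ / c)) * ((m : ℝ) ^ 2)⁻¹ := by
        field_simp
        ring
    _ ≤ 5 ^ d * ((m : ℝ) ^ 2)⁻¹ := by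
        gcongr
        exact mul_le_of_le_one_right (by positivity) hlt.le

lemma exists_tsum_exp_neg_dist_rpow_le (d : ℕ) {c δ : ℝ} (hc : 0 < c) (hδ : 0 < δ) :
    ∃ C, 0 ≤ C ∧ ∀ x : V d,
      ∑' k : Fin d → ℤ, ENNReal.ofReal (exp (-dist (intVec k) x ^ δ / c)) ≤ ENNReal.ofReal C := by
  set a : ℕ → ℝ := fun m => (((2 * m + 3) ^ d : ℕ) : ℝ) * exp (-(m : ℝ) ^ δ / c)
  have ha : ∀ m, 0 ≤ a m := fun m => by positivity
  refine ⟨∑' m, a m, tsum_nonneg ha, fun x => ?_⟩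
  set shell : (Fin d → ℤ) → ℕ := fun k => ⌊dist (intVec k) x⌋₊
  have hterm (m : ℕ) (k : shell ⁻¹' {m}) :
      ENNReal.ofReal (exp (-dist (intVec k) x ^ δ / c)) ≤
        ENNReal.ofReal (exp (-(m : ℝ) ^ δ / c)) := by
    obtain ⟨k, hk⟩ := k
    replace hk : (m : ℝ) ≤ dist (intVec k) x := (mem_singleton_iff.1 hk) ▸ Nat.floor_le dist_nonneg
    gcongr
  calc ∑' k, ENNReal.ofReal (exp (-dist (intVec k) x ^ δ / c))
      = ∑' m, ∑' k : shell ⁻¹' {m}, ENNReal.ofReal (exp (-dist (intVec k) x ^ δ / c)) :=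
        (ENNReal.tsum_fiberwise _ shell).symm
    _ ≤ ∑' m, ∑' _ : shell ⁻¹' {m}, ENNReal.ofReal (exp (-(m : ℝ) ^ δ / c)) :=
        ENNReal.tsum_le_tsum fun m => ENNReal.tsum_le_tsum (hterm m)
    _ ≤ ∑' m, ENNReal.ofReal (a m) := by
        refine ENNReal.tsum_le_tsum fun m => ?_
        rw [ENNReal.tsum_set_const, ENNReal.ofReal_mul (by positivity), ENNReal.ofReal_natCast]
        gcongr
        exact_mod_cast encard_floor_dist_eq_le x m
    _ = ENNReal.ofReal (∑' m, a m) :=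
        (ENNReal.ofReal_tsum_of_nonneg ha (summable_pow_mul_exp_neg_rpow hc hδ)).symm

end LatticeSum

section Probability

open Real

lemma exists_shift_mem_matchTailEvent {ψ : Set (V d)} (hψ : LocFinite ψ) {x y : V d}
    (hy : matchTau (lattice d) (insert x ψ) x = some y) {r : ℝ} (hr : 0 ≤ r)
    (hry : r < dist y x) :
    ∃ k : Fin d → ℤ, shift ψ (-intVec k) ∈ matchTailEvent d (max r (dist (intVec k) x / 2)) := by
  by_cases hx : x ∈ lattice d
  · rw [matchTau_of_mem_of_mem hx (mem_insert x ψ), Option.some.injEq] at hy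
    subst hy
    rw [dist_self] at hry
    linarith
  obtain ⟨k, rfl⟩ : ∃ k, intVec k = y := mem_fst_of_matchTau_eq_some hx (mem_insert x ψ) hy
  refine ⟨k, locFinite_shift hψ _, fun y' hy' => ?_⟩
  rw [matchTau_lattice_shift_neg (y := intVec k) ⟨k, rfl⟩, Option.map_eq_some_iff] at hy'
  obtain ⟨z, hz, rfl⟩ := hy'
  have hle : dist x (intVec k) ≤ dist z (intVec k) := dist_le_of_matchTau_insert hx hy hz
  rw [← dist_eq_norm]
  rw [dist_comm x] at hle
  exact max_lt (hry.trans_le hle) (by linarith)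

lemma measure_shift_mem_matchTailEvent_le {Ω : Type*} [MeasurableSpace Ω] {P : Measure Ω}
    {Ψ : Ω → Set (V d)} (hΨ : IsStationaryPP P Ψ) (t : ℝ) (v : V d) :
    P {ω | shift (Ψ ω) v ∈ matchTailEvent d t} ≤
      P {ω | ∀ y : V d, matchTau (lattice d) (Ψ ω) 0 = some y → t < ‖y‖} :=
  (hΨ.2 v _ (measurableSet_matchTailEvent t)).trans_le (measure_mono fun _ hω => hω.2)

lemma exp_neg_max_rpow_le {r s c δ : ℝ} (hr : 0 ≤ r) (hs : 0 ≤ s) (hc : 0 < c) (hδ : 0 ≤ δ) :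
    exp (-max r (s / 2) ^ δ / c) ≤ exp (-r ^ δ / (2 * c)) * exp (-s ^ δ / (2 ^ δ * (2 * c))) := by
  rw [← exp_add, exp_le_exp]
  have h1 : r ^ δ ≤ max r (s / 2) ^ δ := rpow_le_rpow hr (le_max_left _ _) hδ
  have h2 : (s / 2) ^ δ ≤ max r (s / 2) ^ δ := rpow_le_rpow (by positivity) (le_max_right _ _) hδ
  rw [div_rpow hs zero_le_two] at h2
  calc -max r (s / 2) ^ δ / c ≤ -(r ^ δ + s ^ δ / 2 ^ δ) / (2 * c) := by
        rw [div_le_div_iff₀ hc (by positivity)]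
        nlinarith
    _ = -r ^ δ / (2 * c) + -s ^ δ / (2 ^ δ * (2 * c)) := by
        field_simp
        ring

lemma mul_exp_neg_div_le {a b c u : ℝ} (ha : 0 ≤ a) (hb : 0 < b) (hac : a ≤ c) (hbc : b ≤ c)
    (hu : 0 ≤ u) : a * exp (-u / b) ≤ c * exp (-u / c) := by
  refine mul_le_mul hac (exp_le_exp.2 ?_) (exp_pos _).le (ha.trans hac)
  rw [neg_div, neg_div, neg_le_neg_iff]
  exact div_le_div_of_nonneg_left hu hb hbc

end Probability

theorem statement12_general (d : ℕ) {Ω : Type*} [MeasurableSpace Ω] (P : Measure Ω)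
    (Ψ : Ω → Set (V d)) (hΨ : IsStationaryPP P Ψ)
    (c₁ δ : ℝ) (hc₁ : 0 < c₁) (hδ : 0 < δ)
    (htail : ∀ r : ℝ, 0 ≤ r →
        P {ω | ∀ y : V d, matchTau (lattice d) (Ψ ω) 0 = some y → r < ‖y‖}
          ≤ ENNReal.ofReal (c₁ * Real.exp (-(r ^ δ) / c₁))) :
    ∃ c₃ : ℝ, 0 < c₃ ∧ ∀ r : ℝ, 0 < r → ∀ x : V d,
      P {ω | ∃ y : V d, matchTau (lattice d) (insert x (Ψ ω)) x = some y ∧ r < dist y x}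
        ≤ ENNReal.ofReal (c₃ * Real.exp (-(r ^ δ) / c₃)) := by
  set c := 2 ^ δ * (2 * c₁)
  obtain ⟨C, hC0, hC⟩ := exists_tsum_exp_neg_dist_rpow_le d (c := c) (by positivity) hδ
  refine ⟨max (2 * c₁) (c₁ * C), by positivity, fun r hr x => ?_⟩
  set t : (Fin d → ℤ) → ℝ := fun k => max r (dist (intVec k) x / 2)
  have hcover : {ω | ∃ y, matchTau (lattice d) (insert x (Ψ ω)) x = some y ∧ r < dist y x} ≤ᵐ[P]
      ⋃ k, {ω | shift (Ψ ω) (-intVec k) ∈ matchTailEvent d (t k)} :=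
    hΨ.1.2.mono fun ω hω ⟨y, hy, hry⟩ =>
      mem_iUnion.2 (exists_shift_mem_matchTailEvent hω hy hr.le hry)
  have hk (k : Fin d → ℤ) : P {ω | shift (Ψ ω) (-intVec k) ∈ matchTailEvent d (t k)} ≤
      ENNReal.ofReal (c₁ * Real.exp (-r ^ δ / (2 * c₁))) *
        ENNReal.ofReal (Real.exp (-dist (intVec k) x ^ δ / c)) := by
    refine (measure_shift_mem_matchTailEvent_le hΨ _ _).trans ((htail _ (by positivity)).trans ?_)
    rw [← ENNReal.ofReal_mul (by positivity), mul_assoc]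
    gcongr
    exact exp_neg_max_rpow_le hr.le dist_nonneg hc₁ hδ.le
  calc _ ≤ ∑' k, P {ω | shift (Ψ ω) (-intVec k) ∈ matchTailEvent d (t k)} :=
        (measure_mono_ae hcover).trans (measure_iUnion_le _)
    _ ≤ ∑' k, ENNReal.ofReal (c₁ * Real.exp (-r ^ δ / (2 * c₁))) *
          ENNReal.ofReal (Real.exp (-dist (intVec k) x ^ δ / c)) := ENNReal.tsum_le_tsum hk
    _ ≤ ENNReal.ofReal (c₁ * Real.exp (-r ^ δ / (2 * c₁))) * ENNReal.ofReal C := by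
        rw [ENNReal.tsum_mul_left]
        gcongr
        exact hC x
    _ ≤ _ := by
        rw [← ENNReal.ofReal_mul (by positivity), mul_right_comm]
        exact ENNReal.ofReal_le_ofReal (mul_exp_neg_div_le (by positivity) (by positivity)
          (le_max_right _ _) (le_max_left _ _) (by positivity))

/-- If the matching distance of the origin for the stationary point
process `Ψ` has a subexponential tail with exponent `δ`, then so does the matching distance
of an extra point `x` added to `Ψ` (on the event that it is matched at all). -/
theorem statement12 (d : ℕ) {Ω : Type*} [MeasurableSpace Ω] (P : Measure Ω)
    [IsProbabilityMeasure P] (Ψ : Ω → Set (V d)) (hΨ : IsStationaryPP P Ψ)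
    (c₁ δ : ℝ) (hc₁ : 0 < c₁) (hδ : 0 < δ)
    (htail : ∀ r : ℝ, 0 ≤ r →
        P {ω | ∀ y : V d, matchTau (lattice d) (Ψ ω) 0 = some y → r < ‖y‖}
          ≤ ENNReal.ofReal (c₁ * Real.exp (-(r ^ δ) / c₁))) :
    ∃ c₃ : ℝ, 0 < c₃ ∧ ∀ r : ℝ, 0 < r → ∀ x : V d,
      P {ω | ∃ y : V d, matchTau (lattice d) (insert x (Ψ ω)) x = some y ∧ r < dist y x}
        ≤ ENNReal.ofReal (c₃ * Real.exp (-(r ^ δ) / c₃)) :=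
  statement12_general d P Ψ hΨ c₁ δ hc₁ hδ htail
end
end
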